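/- arXiv:1909.12055 — 11 statements merged into one kernel-verified Lean document; each statement's English description precedes it below -/
import Mathlib

section
/- For every natural number α there exist polynomials P and Q with rational coefficients such that for every natural number n, (∏_{j=0}^{α} (2n − 2j − 1)) · (∑_{0 ≤ i ≤ n, i even} i^{2α+1} · C(2n, n−i)) = C(2n, n) · P(n) and (∏_{j=0}^{α} (2n − 2j − 1)) · (∑_{0 ≤ i ≤ n, i odd} i^{2α+1} · C(2n, n−i)) = C(2n, n) · Q(n), where both sides are viewed as rational numbers and the factors 2n − 2j − 1 are computed in the integers. -/
/-!
Write `S_f(n) = ∑ᵢ f(i) C(2n, n+i)`. From `(n² - i²) C(2n, n+i) = 2n(2n-1) C(2n-2, n-1+i)`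
we get `S_{i²f}(n) = n² S_f(n) - 2n(2n-1) S_f(n-1)`, and since
`n C(2n, n) = 2(2n-1) C(2n-2, n-1)`, the extra factor `2n - 2α - 3` of the product turns this
into a recursion for the quotients by `C(2n, n)`, with polynomial
`X² ((2X - 2α - 3) P(X) - (2X - 1) P(X - 1))`. For the base case `α = 0`,
`i C(2n, n+i) = n (C(2n-2, n-2+i) - C(2n-2, n+i))` telescopes along each parity class, giving
`n C(2n-2, n-1)` for odd `i` and `n C(2n-2, n)` for even `i`.
-/

open Finset Polynomial

theorem cast_choose_mul_succ_eq {R : Type*} [CommRing R] (N k : ℕ) :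
    (N.choose k : R) * (N + 1) = (N + 1).choose k * (N + 1 - k) := by
  cases k with
  | zero => simp
  | succ k =>
    have h₁ := congrArg (Nat.cast : ℕ → R) (Nat.add_one_mul_choose_eq N k)
    have h₂ := congrArg (Nat.cast : ℕ → R) (Nat.choose_succ_succ' N k)
    push_cast at h₁ h₂ ⊢
    linear_combination -h₁ - (N + 1 : R) * h₂

theorem cast_add_one_mul_sub_mul_choose {R : Type*} [CommRing R] (N k : ℕ) :
    ((k : R) + 1) * (N + 1 - k) * (N + 2).choose (k + 1) = (N + 2) * (N + 1) * N.choose k := by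
  have h₁ := cast_choose_mul_succ_eq (R := R) N k
  have h₂ := congrArg (Nat.cast : ℕ → R) (Nat.add_one_mul_choose_eq (N + 1) k)
  push_cast at h₂
  linear_combination (-(N + 1 - k : R)) * h₂ - (N + 2) * h₁

theorem cast_mul_choose_add_two_eq_sub {R : Type*} [CommRing R] (N k : ℕ) :
    (2 * k + 2 - N : R) * (N + 2).choose (k + 2) =
      (N + 2) * ((N.choose k : R) - N.choose (k + 2)) := by
  have h₁ := congrArg (Nat.cast : ℕ → R) (Nat.add_one_mul_choose_eq (N + 1) (k + 1))
  have h₂ := cast_choose_mul_succ_eq (R := R) (N + 1) (k + 2)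
  have p₁ := congrArg (Nat.cast : ℕ → R) (Nat.choose_succ_succ' N k)
  have p₂ := congrArg (Nat.cast : ℕ → R) (Nat.choose_succ_succ' N (k + 1))
  push_cast at h₁ h₂ p₁ p₂
  linear_combination (N + 2 : R) * (p₁ - p₂) - (h₁ - h₂)

theorem sum_range_two_mul {M : Type*} [AddCommMonoid M] (g : ℕ → M) (N : ℕ) :
    ∑ i ∈ range (2 * N), g i = ∑ k ∈ range N, (g (2 * k) + g (2 * k + 1)) := by
  induction N with
  | zero => simp
  | succ N ih => rw [mul_add_one, sum_range_succ, sum_range_succ, sum_range_succ, ih, add_assoc]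

/-- Indexed by `n + i` rather than `n - i`, so that terms with `i > n` vanish instead of being
truncated. -/
def halfRowSum (f : ℕ → ℚ) (n : ℕ) : ℚ :=
  ∑ i ∈ range (n + 1), f i * (2 * n).choose (n + i)

theorem sum_range_eq_halfRowSum (f : ℕ → ℚ) {n N : ℕ} (h : n + 1 ≤ N) :
    ∑ i ∈ range N, f i * (2 * n).choose (n + i) = halfRowSum f n := by
  refine (sum_subset (range_subset_range.2 h) fun i hN hn => ?_).symm
  rw [Nat.choose_eq_zero_of_lt (by simp at hN hn; omega), Nat.cast_zero, mul_zero]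

theorem halfRowSum_sq_mul (f : ℕ → ℚ) (n : ℕ) :
    halfRowSum (fun i => (i : ℚ) ^ 2 * f i) (n + 1) =
      (n + 1) ^ 2 * halfRowSum f (n + 1) - 2 * (n + 1) * (2 * n + 1) * halfRowSum f n := by
  rw [← sum_range_eq_halfRowSum f (le_refl (n + 2)),
    ← sum_range_eq_halfRowSum f (N := n + 2) (by omega), halfRowSum, mul_sum, mul_sum,
    ← sum_sub_distrib]
  refine sum_congr rfl fun i _ => ?_
  have h := cast_add_one_mul_sub_mul_choose (R := ℚ) (2 * n) (n + i)
  rw [show 2 * (n + 1) = 2 * n + 2 by ring, show n + 1 + i = n + i + 1 by ring]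
  push_cast at h ⊢
  linear_combination (-f i) * h

theorem sum_range_two_mul_add_mul_choose (m r N : ℕ) :
    ∑ k ∈ range N, ((2 * k + r + 1 : ℕ) : ℚ) * (2 * m + 2).choose (m + 2 * k + r + 2) =
      (m + 1) * ((2 * m).choose (m + r) - (2 * m).choose (m + 2 * N + r)) := by
  have hterm : ∀ k : ℕ, ((2 * k + r + 1 : ℕ) : ℚ) * (2 * m + 2).choose (m + 2 * k + r + 2) =
      (m + 1) * ((2 * m).choose (m + 2 * k + r) - (2 * m).choose (m + 2 * (k + 1) + r)) := by
    intro k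
    have h := cast_mul_choose_add_two_eq_sub (R := ℚ) (2 * m) (m + 2 * k + r)
    rw [show m + 2 * (k + 1) + r = m + 2 * k + r + 2 by ring]
    push_cast at h ⊢
    linear_combination h / 2
  rw [sum_congr rfl fun k _ => hterm k, ← mul_sum,
    sum_range_sub' (fun k => ((2 * m).choose (m + 2 * k + r) : ℚ))]
  simp

theorem halfRowSum_odd (m : ℕ) :
    halfRowSum (fun i => if Odd i then (i : ℚ) else 0) (m + 1) = (m + 1) * (2 * m).choose m := by
  rw [← sum_range_eq_halfRowSum _ (N := 2 * (m + 2)) (by omega), sum_range_two_mul]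
  calc _ = ∑ k ∈ range (m + 2),
          ((2 * k + 0 + 1 : ℕ) : ℚ) * (2 * m + 2).choose (m + 2 * k + 0 + 2) :=
        sum_congr rfl fun k _ => by rw [if_neg (by simp), if_pos (by simp)]; ring_nf
    _ = (m + 1) * ((2 * m).choose (m + 0) - (2 * m).choose (m + 2 * (m + 2) + 0)) :=
        sum_range_two_mul_add_mul_choose m 0 (m + 2)
    _ = _ := by rw [Nat.choose_eq_zero_of_lt (by omega : 2 * m < m + 2 * (m + 2) + 0)]; simp

theorem halfRowSum_even (m : ℕ) :
    halfRowSum (fun i => if Even i then (i : ℚ) else 0) (m + 1) =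
      (m + 1) * (2 * m).choose (m + 1) := by
  rw [← sum_range_eq_halfRowSum _ (N := 2 * (m + 1) + 1) (by omega), sum_range_succ',
    sum_range_two_mul]
  calc _ = ∑ k ∈ range (m + 1),
          ((2 * k + 1 + 1 : ℕ) : ℚ) * (2 * m + 2).choose (m + 2 * k + 1 + 2) := by
        simp only [CharP.cast_eq_zero, ite_self, zero_mul, add_zero]
        refine sum_congr rfl fun k _ => ?_
        rw [if_neg (by simp [parity_simps]), if_pos (by simp [parity_simps])]
        ring_nf
    _ = (m + 1) * ((2 * m).choose (m + 1) - (2 * m).choose (m + 2 * (m + 1) + 1)) :=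
        sum_range_two_mul_add_mul_choose m 1 (m + 1)
    _ = _ := by rw [Nat.choose_eq_zero_of_lt (by omega : 2 * m < m + 2 * (m + 1) + 1)]; simp

theorem cast_succ_mul_choose_succ_central (m : ℕ) :
    ((m : ℚ) + 1) * (2 * m + 2).choose (m + 1) = 2 * (2 * m + 1) * (2 * m).choose m := by
  have h := Nat.succ_mul_centralBinom_succ m
  rw [Nat.centralBinom_eq_two_mul_choose, Nat.centralBinom_eq_two_mul_choose] at h
  exact_mod_cast h

def oddFallingProd (α : ℕ) (x : ℚ) : ℚ :=
  ∏ j ∈ range (α + 1), (2 * x - 2 * j - 1)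

theorem oddFallingProd_succ (α : ℕ) (x : ℚ) :
    oddFallingProd (α + 1) x = oddFallingProd α x * (2 * x - 2 * α - 3) := by
  rw [oddFallingProd, prod_range_succ, oddFallingProd]
  push_cast
  ring

theorem oddFallingProd_succ_add_one (α : ℕ) (x : ℚ) :
    oddFallingProd (α + 1) (x + 1) = (2 * x + 1) * oddFallingProd α x := by
  rw [oddFallingProd, prod_range_succ', oddFallingProd, mul_comm]
  push_cast
  congr 1
  · ring
  · exact prod_congr rfl fun j _ => by ring

theorem oddFallingProd_zero_mul_halfRowSum_odd (n : ℕ) :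
    oddFallingProd 0 n * halfRowSum (fun i => if Odd i then (i : ℚ) else 0) n =
      (2 * n).choose n * (n ^ 2 / 2) := by
  cases n with
  | zero => simp [halfRowSum]
  | succ m =>
    rw [halfRowSum_odd, show 2 * (m + 1) = 2 * m + 2 by ring]
    simp only [oddFallingProd, zero_add, range_one, prod_singleton, CharP.cast_eq_zero]
    push_cast
    linear_combination (-(m + 1 : ℚ) / 2) * cast_succ_mul_choose_succ_central m

theorem oddFallingProd_zero_mul_halfRowSum_even (n : ℕ) :
    oddFallingProd 0 n * halfRowSum (fun i => if Even i then (i : ℚ) else 0) n =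
      (2 * n).choose n * ((n ^ 2 - n) / 2) := by
  cases n with
  | zero => simp [halfRowSum]
  | succ m =>
    have h := congrArg (Nat.cast : ℕ → ℚ) (Nat.choose_succ_right_eq (2 * m) m)
    rw [show 2 * m - m = m by omega] at h
    rw [halfRowSum_even, show 2 * (m + 1) = 2 * m + 2 by ring]
    simp only [oddFallingProd, zero_add, range_one, prod_singleton, CharP.cast_eq_zero]
    push_cast at h ⊢
    linear_combination (-(m : ℚ) / 2) * cast_succ_mul_choose_succ_central m + (2 * m + 1) * h

theorem oddFallingProd_succ_mul_halfRowSum_sq_mul {f : ℕ → ℚ} {α : ℕ} {P : ℚ[X]}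
    (h : ∀ n : ℕ, oddFallingProd α n * halfRowSum f n = (2 * n).choose n * P.eval (n : ℚ))
    (n : ℕ) :
    oddFallingProd (α + 1) n * halfRowSum (fun i => (i : ℚ) ^ 2 * f i) n =
      (2 * n).choose n * (X ^ 2 * ((2 * X - C (2 * α + 3 : ℚ)) * P -
        (2 * X - 1) * P.comp (X - 1))).eval (n : ℚ) := by
  cases n with
  | zero => simp [halfRowSum]
  | succ m =>
    have h₁ := h (m + 1)
    have h₀ := h m
    rw [halfRowSum_sq_mul]
    simp only [eval_mul, eval_sub, eval_pow, eval_comp, eval_X, eval_C, eval_one, eval_ofNat]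
    push_cast at h₁ h₀ ⊢
    rw [show 2 * (m + 1) = 2 * m + 2 by ring] at h₁ ⊢
    rw [add_sub_cancel_right]
    have e₁ := oddFallingProd_succ α ((m : ℚ) + 1)
    have e₂ := oddFallingProd_succ_add_one α (m : ℚ)
    have c := cast_succ_mul_choose_succ_central m
    linear_combination ((m : ℚ) + 1) ^ 2 * halfRowSum f (m + 1) * e₁
      - 2 * ((m : ℚ) + 1) * (2 * m + 1) * halfRowSum f m * e₂
      + ((m : ℚ) + 1) ^ 2 * (2 * m - 2 * α - 1) * h₁ - 2 * ((m : ℚ) + 1) * (2 * m + 1) ^ 2 * h₀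
      + (2 * (m : ℚ) + 1) * (m + 1) * P.eval (m : ℚ) * c

theorem exists_poly_oddFallingProd_mul_halfRowSum (f : ℕ → ℚ) (P₀ : ℚ[X])
    (h₀ : ∀ n : ℕ, oddFallingProd 0 n * halfRowSum f n = (2 * n).choose n * P₀.eval (n : ℚ))
    (α : ℕ) :
    ∃ P : ℚ[X], ∀ n : ℕ, oddFallingProd α n * halfRowSum (fun i => (i : ℚ) ^ (2 * α) * f i) n =
      (2 * n).choose n * P.eval (n : ℚ) := by
  induction α with
  | zero => exact ⟨P₀, by simpa using h₀⟩
  | succ α ih =>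
    obtain ⟨P, hP⟩ := ih
    have hpow : (fun i : ℕ => (i : ℚ) ^ (2 * (α + 1)) * f i) =
        fun i : ℕ => (i : ℚ) ^ 2 * ((i : ℚ) ^ (2 * α) * f i) := by
      funext i
      ring
    exact ⟨_, hpow ▸ oddFallingProd_succ_mul_halfRowSum_sq_mul hP⟩

theorem sum_filter_pow_mul_choose_eq_halfRowSum (p : ℕ → Prop) [DecidablePred p] (α n : ℕ) :
    ∑ i ∈ (range (n + 1)).filter p, (i : ℚ) ^ (2 * α + 1) * (2 * n).choose (n - i) =
      halfRowSum (fun i => (i : ℚ) ^ (2 * α) * if p i then (i : ℚ) else 0) n := by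
  rw [sum_filter, halfRowSum]
  refine sum_congr rfl fun i hi => ?_
  rw [Nat.choose_symm_of_eq_add (by simp at hi; omega : 2 * n = (n - i) + (n + i))]
  split_ifs <;> ring

/-- For every natural number `α` there exist polynomials `P` and `Q` with rational
coefficients such that for every natural number `n`,
`(∏_{j=0}^{α} (2n − 2j − 1)) · (∑_{0 ≤ i ≤ n, i even} i^{2α+1} · C(2n, n−i)) = C(2n, n) · P(n)`
and similarly with the sum over odd `i` and `Q`. -/
theorem stmt_0 (α : ℕ) :
    ∃ P Q : Polynomial ℚ,
      ∀ n : ℕ,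
        (((∏ j ∈ Finset.range (α + 1), (2 * (n : ℤ) - 2 * (j : ℤ) - 1)) : ℤ) : ℚ) *
            (∑ i ∈ (Finset.range (n + 1)).filter (fun i => Even i),
              (i : ℚ) ^ (2 * α + 1) * (Nat.choose (2 * n) (n - i) : ℚ))
          = (Nat.choose (2 * n) n : ℚ) * P.eval (n : ℚ) ∧
        (((∏ j ∈ Finset.range (α + 1), (2 * (n : ℤ) - 2 * (j : ℤ) - 1)) : ℤ) : ℚ) *
            (∑ i ∈ (Finset.range (n + 1)).filter (fun i => Odd i),
              (i : ℚ) ^ (2 * α + 1) * (Nat.choose (2 * n) (n - i) : ℚ))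
          = (Nat.choose (2 * n) n : ℚ) * Q.eval (n : ℚ) := by
  obtain ⟨P, hP⟩ := exists_poly_oddFallingProd_mul_halfRowSum _ (C (1 / 2) * (X ^ 2 - X))
    (fun n => by simpa [div_eq_inv_mul] using oddFallingProd_zero_mul_halfRowSum_even n) α
  obtain ⟨Q, hQ⟩ := exists_poly_oddFallingProd_mul_halfRowSum _ (C (1 / 2) * X ^ 2)
    (fun n => by simpa [div_eq_inv_mul] using oddFallingProd_zero_mul_halfRowSum_odd n) α
  refine ⟨P, Q, fun n => ⟨?_, ?_⟩⟩
  · rw [sum_filter_pow_mul_choose_eq_halfRowSum]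
    push_cast
    exact hP n
  · rw [sum_filter_pow_mul_choose_eq_halfRowSum]
    push_cast
    exact hQ n
end

section
/- For every natural number n, 2·(2n − 1) · ∑_{0 ≤ i ≤ n, i even} i · C(2n, n−i) = C(2n, n) · (n² − n), as an identity of integers. -/
/-! By symmetry the summand is `i * C(2n, n + i)`, which vanishes for `i > n`. For `n = m + 1`
the identity `(m + 1) * (C(2m, j) - C(2m, j + 2)) = (j + 1 - m) * C(2m + 2, j + 2)` makes the sum
over even `i` telescope in steps of two, leaving `n * C(2n - 2, n)`; what remains is the relation
`2 * (2n - 1) * C(2n - 2, n) = (n - 1) * C(2n, n)` between neighbouring binomial coefficients. -/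

open Finset

theorem sum_filter_even_range_eq_sum_range_two_mul {M : Type*} [AddCommMonoid M]
    (f : ℕ → M) (n : ℕ) (hf : ∀ i, n < i → f i = 0) :
    ∑ i ∈ (range (n + 1)).filter Even, f i = ∑ k ∈ range (n + 1), f (2 * k) := by
  rw [← sum_image (g := (2 * ·)) fun a _ b _ h => by simpa using h]
  refine sum_subset (fun i hi => ?_) fun i hi hi' => hf i ?_
  · obtain ⟨hin, k, rfl⟩ := mem_filter.mp hi
    exact mem_image.mpr ⟨k, by simp only [mem_range] at hin ⊢; omega, by ring⟩
  · obtain ⟨k, -, rfl⟩ := mem_image.mp hi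
    simpa using fun h => hi' (mem_filter.mpr ⟨mem_range.mpr h, even_two_mul k⟩)

theorem succ_mul_choose_sub_choose_add_two (m j : ℕ) :
    ((m : ℤ) + 1) * ((2 * m).choose j - (2 * m).choose (j + 2)) =
      ((j : ℤ) + 1 - m) * (2 * m + 2).choose (j + 2) := by
  have h₁ := congrArg (Nat.cast : ℕ → ℤ) (Nat.add_one_mul_choose_eq (2 * m) j)
  have h₂ := congrArg (Nat.cast : ℕ → ℤ) (Nat.add_one_mul_choose_eq (2 * m) (j + 1))
  rw [Nat.choose_succ_succ'] at h₁ h₂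
  rw [Nat.choose_succ_succ', Nat.choose_succ_succ', Nat.choose_succ_succ']
  push_cast at h₁ h₂ ⊢
  linear_combination h₁ + h₂

theorem sum_range_two_mul_mul_choose (m N : ℕ) :
    ∑ k ∈ range (N + 1), (2 * k : ℤ) * (2 * m + 2).choose (m + 1 + 2 * k) =
      (m + 1) * ((2 * m).choose (m + 1) - (2 * m).choose (m + 1 + 2 * N)) := by
  have telescope := sum_range_sub' (fun k => ((2 * m).choose (m + 1 + 2 * k) : ℤ)) N
  simp only [mul_zero, add_zero] at telescope
  rw [← telescope, mul_sum, sum_range_succ']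
  simp only [Nat.cast_zero, mul_zero, zero_mul, add_zero]
  refine sum_congr rfl fun k _ => ?_
  have step := succ_mul_choose_sub_choose_add_two m (m + 1 + 2 * k)
  rw [show m + 1 + 2 * k + 2 = m + 1 + 2 * (k + 1) by ring] at step
  rw [step]
  push_cast
  ring

theorem sum_filter_even_mul_choose_sub (m : ℕ) :
    ∑ i ∈ (range (m + 2)).filter Even, (i : ℤ) * (2 * (m + 1)).choose (m + 1 - i) =
      (m + 1) * (2 * m).choose (m + 1) := by
  have reflect : ∀ i ∈ (range (m + 2)).filter Even,
      (i : ℤ) * (2 * (m + 1)).choose (m + 1 - i) = i * (2 * m + 2).choose (m + 1 + i) := by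
    intro i hi
    have hi : i < m + 2 := mem_range.mp (mem_filter.mp hi).1
    rw [mul_add_one, Nat.choose_symm_of_eq_add (by omega : 2 * m + 2 = (m + 1 - i) + (m + 1 + i))]
  rw [sum_congr rfl reflect, sum_filter_even_range_eq_sum_range_two_mul _ (m + 1) fun i hi => by
      rw [Nat.choose_eq_zero_of_lt (by omega), Nat.cast_zero, mul_zero]]
  push_cast
  rw [sum_range_two_mul_mul_choose,
    Nat.choose_eq_zero_of_lt (by omega : 2 * m < m + 1 + 2 * (m + 1))]
  ring

theorem two_mul_two_mul_add_one_mul_choose_succ (m : ℕ) :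
    2 * (2 * m + 1) * (2 * m).choose (m + 1) = m * (2 * (m + 1)).choose (m + 1) := by
  have central := Nat.succ_mul_centralBinom_succ m
  have lower := Nat.choose_succ_right_eq (2 * m) m
  rw [Nat.centralBinom_eq_two_mul_choose, Nat.centralBinom_eq_two_mul_choose] at central
  rw [two_mul, Nat.add_sub_cancel, ← two_mul] at lower
  apply Nat.eq_of_mul_eq_mul_left (by omega : 0 < m + 1)
  linear_combination 2 * (2 * m + 1) * lower + m * central.symm

/-- For every natural number `n`,
`2·(2n − 1) · ∑_{0 ≤ i ≤ n, i even} i · C(2n, n−i) = C(2n, n) · (n² − n)`,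
as an identity of integers. -/
theorem stmt_1 (n : ℕ) :
    2 * (2 * (n : ℤ) - 1) *
        (∑ i ∈ (Finset.range (n + 1)).filter (fun i => Even i),
          (i : ℤ) * (Nat.choose (2 * n) (n - i) : ℤ))
      = (Nat.choose (2 * n) n : ℤ) * ((n : ℤ) ^ 2 - (n : ℤ)) := by
  cases n with
  | zero => simp [sum_filter]
  | succ m =>
    rw [sum_filter_even_mul_choose_sub]
    have h := congrArg (Nat.cast : ℕ → ℤ) (two_mul_two_mul_add_one_mul_choose_succ m)
    push_cast at h ⊢
    linear_combination (m + 1 : ℤ) * h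
end

section
/- For every natural number n, 2·(2n − 1) · ∑_{0 ≤ i ≤ n, i odd} i · C(2n, n−i) = C(2n, n) · n², as an identity of integers. -/
open Finset

/-- Telescoping auxiliary function. -/
def auxG (n k : ℕ) : ℤ :=
  ((n : ℤ) ^ 2 - (k : ℤ) ^ 2) * (if k ≤ n then (Nat.choose (2 * n) (n - k) : ℤ) else 0)

/-- Contiguous relation for central-ish binomials. -/
lemma aux_contig (n k : ℕ) (hk : k < n) :
    ((n : ℤ) - k) * (Nat.choose (2 * n) (n - k) : ℤ)
      = ((n : ℤ) + k + 1) * (Nat.choose (2 * n) (n - k - 1) : ℤ) := by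
  have h := Nat.choose_succ_right_eq (2 * n) (n - k - 1)
  have h1 : n - k - 1 + 1 = n - k := by omega
  have h2 : 2 * n - (n - k - 1) = n + k + 1 := by omega
  rw [h1, h2] at h
  have h3 := congrArg (Nat.cast : ℕ → ℤ) h
  push_cast at h3
  have h4 : ((n - k : ℕ) : ℤ) = (n : ℤ) - k := by omega
  rw [h4] at h3
  linarith

lemma aux_key (n i : ℕ) (h1 : 1 ≤ i) (h2 : i ≤ n) :
    2 * (2 * (n : ℤ) - 1) * (i : ℤ) * (Nat.choose (2 * n) (n - i) : ℤ)
      = auxG n (i - 1) - auxG n (i + 1) := by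
  have hi1 : ((i - 1 : ℕ) : ℤ) = (i : ℤ) - 1 := by omega
  have R1 : ((n : ℤ) - (i - 1 : ℕ)) * (Nat.choose (2 * n) (n - (i - 1)) : ℤ)
      = ((n : ℤ) + (i - 1 : ℕ) + 1) * (Nat.choose (2 * n) (n - (i - 1) - 1) : ℤ) :=
    aux_contig n (i - 1) (by omega)
  have e1 : n - (i - 1) - 1 = n - i := by omega
  rw [e1, hi1] at R1
  rcases lt_or_eq_of_le h2 with hlt | heq
  · -- i < n
    have R2 : ((n : ℤ) - i) * (Nat.choose (2 * n) (n - i) : ℤ)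
        = ((n : ℤ) + i + 1) * (Nat.choose (2 * n) (n - i - 1) : ℤ) :=
      aux_contig n i hlt
    have e2 : n - i - 1 = n - (i + 1) := by omega
    rw [e2] at R2
    unfold auxG
    rw [if_pos (by omega : i - 1 ≤ n), if_pos (by omega : i + 1 ≤ n), hi1]
    push_cast
    have hni : (i : ℤ) ≤ (n : ℤ) := by exact_mod_cast h2
    have hi0 : (1 : ℤ) ≤ (i : ℤ) := by exact_mod_cast h1
    have hc : ((n : ℤ) - i + 1) * ((n : ℤ) + i + 1) ≠ 0 := by
      have : (0 : ℤ) < ((n : ℤ) - i + 1) * ((n : ℤ) + i + 1) := by nlinarith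
      exact ne_of_gt this
    apply mul_left_cancel₀ hc
    linear_combination (-((n : ℤ) + i + 1) * ((n : ℤ) ^ 2 - ((i : ℤ) - 1) ^ 2)) * R1 +
      (-((n : ℤ) - i + 1) * ((n : ℤ) ^ 2 - ((i : ℤ) + 1) ^ 2)) * R2
  · -- i = n
    subst heq
    unfold auxG
    rw [if_pos (by omega : i - 1 ≤ i), if_neg (by omega : ¬ i + 1 ≤ i), hi1]
    have e3 : i - (i - 1) = 1 := by omega
    have e4 : i - i = 0 := by omega
    rw [e4] at R1 ⊢
    push_cast at R1 ⊢
    nlinarith [R1]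

/-- For every natural number `n`,
`2·(2n − 1) · ∑_{0 ≤ i ≤ n, i odd} i · C(2n, n−i) = C(2n, n) · n²`,
as an identity of integers. -/
theorem stmt_2 (n : ℕ) :
    2 * (2 * (n : ℤ) - 1) *
        (∑ i ∈ (Finset.range (n + 1)).filter (fun i => Odd i),
          (i : ℤ) * (Nat.choose (2 * n) (n - i) : ℤ))
      = (Nat.choose (2 * n) n : ℤ) * (n : ℤ) ^ 2 := by
  have hset : (Finset.range (n + 1)).filter (fun i => Odd i)
      = (Finset.range ((n + 1) / 2)).image (fun j => 2 * j + 1) := by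
    ext i
    simp only [mem_filter, mem_range, mem_image, Nat.odd_iff]
    constructor
    · rintro ⟨hi, hmod⟩
      exact ⟨i / 2, by omega, by omega⟩
    · rintro ⟨j, hj, rfl⟩
      omega
  rw [hset, Finset.sum_image (by intro a _ b _ h; simp only at h; omega), Finset.mul_sum]
  have hterm : ∀ j ∈ Finset.range ((n + 1) / 2),
      2 * (2 * (n : ℤ) - 1) * (((2 * j + 1 : ℕ) : ℤ) * (Nat.choose (2 * n) (n - (2 * j + 1)) : ℤ))
        = auxG n (2 * j) - auxG n (2 * (j + 1)) := by
    intro j hj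
    rw [mem_range] at hj
    have := aux_key n (2 * j + 1) (by omega) (by omega)
    have e1 : 2 * j + 1 - 1 = 2 * j := by omega
    have e2 : 2 * j + 1 + 1 = 2 * (j + 1) := by omega
    rw [e1, e2] at this
    rw [← this]; ring
  rw [Finset.sum_congr rfl hterm, Finset.sum_range_sub' (fun j => auxG n (2 * j))]
  have hG0 : auxG n (2 * 0) = ((n : ℤ)) ^ 2 * (Nat.choose (2 * n) n : ℤ) := by
    unfold auxG
    rw [if_pos (by omega)]
    norm_num
  have hGend : auxG n (2 * ((n + 1) / 2)) = 0 := by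
    unfold auxG
    by_cases h : 2 * ((n + 1) / 2) ≤ n
    · have : 2 * ((n + 1) / 2) = n := by omega
      rw [this]; ring
    · rw [if_neg h]; ring
  rw [hG0, hGend]
  ring
end

section
/- For every natural number n, (2n − 1)·(2n − 3) · ∑_{0 ≤ i ≤ n, i even} i³ · C(2n, n−i) = C(2n, n) · n²·(n − 1)², as an identity of integers. -/
@[reducible] private def Pg (n j : ℤ) : ℤ :=
  4*j^2 - 12*j^3 + 8*j^4 - 14*n*j^2 + 32*n*j^3 - 16*n*j^4 - n^2 + 18*n^2*j^2
    - 16*n^2*j^3 + 2*n^3 - 4*n^3*j^2 - n^4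

private def Gt (n j : ℕ) : ℤ := Pg n j * (Nat.choose (2*n) (n + 2*j) : ℤ)

private lemma choose_succ_int (m k : ℕ) :
    (Nat.choose m (k+1) : ℤ) * ((k:ℤ)+1) = (Nat.choose m k : ℤ) * ((m:ℤ) - k) := by
  rcases le_or_gt k m with h | h
  · have H := Nat.choose_succ_right_eq m k
    zify [h] at H
    linarith [H]
  · rw [Nat.choose_eq_zero_of_lt h, Nat.choose_eq_zero_of_lt (by omega)]
    simp

private lemma key (n j : ℕ) :
    Gt n (j+1) - Gt n j
      = (2*(n:ℤ) - 1) * (2*(n:ℤ) - 3) * (2*(j:ℤ))^3 * (Nat.choose (2*n) (n + 2*j) : ℤ) := by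
  have h1 := choose_succ_int (2*n) (n + 2*j)
  have h2 := choose_succ_int (2*n) (n + 2*j + 1)
  push_cast at h1 h2
  set a0 : ℤ := (Nat.choose (2*n) (n + 2*j) : ℤ) with ha0
  set a1 : ℤ := (Nat.choose (2*n) (n + 2*j + 1) : ℤ) with ha1
  set a2 : ℤ := (Nat.choose (2*n) (n + 2*j + 2) : ℤ) with ha2
  have e : ((n:ℤ)+2*j+1) * (((n:ℤ)+2*j+2) * a2)
      = ((n:ℤ)-2*j) * (((n:ℤ)-2*j-1) * a0) := by
    linear_combination ((n:ℤ)+2*j+1) * h2 + ((n:ℤ)-2*j-1) * h1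
  have hM : ((n:ℤ)+2*j+1) * ((n:ℤ)+2*j+2) ≠ 0 := by positivity
  apply mul_left_cancel₀ hM
  have hGt1 : Gt n (j+1) = Pg n (j+1) * a2 := by
    rw [Gt, ha2]
    norm_num [show n + 2*(j+1) = n + 2*j + 2 by ring]
  rw [hGt1, Gt, ← ha0]
  linear_combination Pg (n:ℤ) ((j:ℤ)+1) * e

/-- For every natural number `n`,
`(2n − 1)·(2n − 3) · ∑_{0 ≤ i ≤ n, i even} i³ · C(2n, n−i) = C(2n, n) · n²·(n − 1)²`,
as an identity of integers. -/
theorem stmt_3 (n : ℕ) :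
    (2 * (n : ℤ) - 1) * (2 * (n : ℤ) - 3) *
        (∑ i ∈ (Finset.range (n + 1)).filter (fun i => Even i),
          (i : ℤ) ^ 3 * (Nat.choose (2 * n) (n - i) : ℤ))
      = (Nat.choose (2 * n) n : ℤ) * ((n : ℤ) ^ 2 * ((n : ℤ) - 1) ^ 2) := by
  have himg : (Finset.range (n + 1)).filter (fun i => Even i)
      = (Finset.range (n/2 + 1)).image (fun j => 2*j) := by
    ext i
    simp only [Finset.mem_filter, Finset.mem_range, Finset.mem_image]
    constructor
    · rintro ⟨hi, r, rfl⟩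
      exact ⟨r, by omega, by omega⟩
    · rintro ⟨j, hj, rfl⟩
      exact ⟨by omega, even_two_mul j⟩
  rw [himg, Finset.sum_image (by intro a _ b _ h; simp only at h; omega), Finset.mul_sum]
  have hcongr : ∀ j ∈ Finset.range (n/2 + 1),
      (2 * (n : ℤ) - 1) * (2 * (n : ℤ) - 3) *
        (((2*j : ℕ) : ℤ) ^ 3 * (Nat.choose (2 * n) (n - 2*j) : ℤ))
      = Gt n (j+1) - Gt n j := by
    intro j hj
    simp only [Finset.mem_range] at hj
    have h2j : 2*j ≤ n := by omega
    have hsym : Nat.choose (2*n) (n - 2*j) = Nat.choose (2*n) (n + 2*j) := by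
      rw [show n - 2*j = 2*n - (n + 2*j) by omega, Nat.choose_symm (by omega)]
    rw [hsym, key n j]
    push_cast
    ring
  rw [Finset.sum_congr rfl hcongr, Finset.sum_range_sub (fun j => Gt n j)]
  have hGm : Gt n (n/2 + 1) = 0 := by
    have : Nat.choose (2*n) (n + 2*(n/2 + 1)) = 0 :=
      Nat.choose_eq_zero_of_lt (by omega)
    rw [Gt, this]
    simp
  have hG0 : Gt n 0 = -((n:ℤ)^2 * ((n:ℤ) - 1)^2) * (Nat.choose (2*n) n : ℤ) := by
    rw [Gt]
    norm_num
    ring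
  rw [hGm, hG0]
  ring
end

section
/- For every natural number n, 2·(2n − 1)·(2n − 3) · ∑_{0 ≤ i ≤ n, i odd} i³ · C(2n, n−i) = C(2n, n) · n²·(2n² − 4n + 1), as an identity of integers. -/
/-!
Writing `C(2n, n - i) = C(2n, n + i)`, the summand `i³ C(2n, n + i)` is, up to the factor
`2(2n - 1)(2n - 3)`, the step-two difference `G(i) - G(i + 2)` of the hypergeometric term
`G(i) = P(i) C(2n, n + i)` with `P` a quartic found by Gosper's algorithm. Over the odd `i` the sum
telescopes to `G(1)`, since `G` vanishes for `i > n`, and `G(1)` is the right-hand side.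
-/

open Finset

theorem Nat.cast_choose_succ_mul {R : Type*} [CommRing R] (m k : ℕ) :
    (m.choose (k + 1) : R) * (k + 1) = m.choose k * (m - k) := by
  rcases le_or_gt k m with hk | hk
  · exact_mod_cast congrArg (Nat.cast : ℕ → R) (Nat.choose_succ_right_eq m k)
  · simp [Nat.choose_eq_zero_of_lt hk, Nat.choose_eq_zero_of_lt (Nat.lt_succ_of_lt hk)]

theorem Nat.cast_choose_add_two_mul {R : Type*} [CommRing R] (m k : ℕ) :
    (m.choose (k + 2) : R) * ((k + 1) * (k + 2)) = m.choose k * ((m - k) * (m - k - 1)) := by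
  have h₁ := Nat.cast_choose_succ_mul (R := R) m k
  have h₂ := Nat.cast_choose_succ_mul (R := R) m (k + 1)
  push_cast at h₂
  linear_combination ((k : R) + 1) * h₂ + ((m : R) - k - 1) * h₁

theorem Finset.sum_filter_odd_range_two_mul {M : Type*} [AddCommMonoid M] (f : ℕ → M) (N : ℕ) :
    ∑ i ∈ (range (2 * N)).filter Odd, f i = ∑ j ∈ range N, f (2 * j + 1) := by
  induction N with
  | zero => simp
  | succ N ih =>
    rw [show 2 * (N + 1) = 2 * N + 1 + 1 by ring, range_add_one, range_add_one, filter_insert,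
      filter_insert, if_pos (odd_two_mul_add_one N), if_neg (by simp), sum_insert (by simp), ih,
      sum_range_succ, add_comm]

theorem sum_filter_odd_mul_choose_sub (n : ℕ) (f : ℕ → ℤ) :
    ∑ i ∈ (range (n + 1)).filter Odd, f i * (2 * n).choose (n - i)
      = ∑ j ∈ range (n + 1), f (2 * j + 1) * (2 * n).choose (n + (2 * j + 1)) := by
  rw [← sum_filter_odd_range_two_mul (fun i => f i * (2 * n).choose (n + i))]
  have hsymm : ∀ i ∈ (range (n + 1)).filter Odd,
      f i * (2 * n).choose (n - i) = f i * (2 * n).choose (n + i) := fun i hi => by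
    rw [mem_filter, mem_range] at hi
    rw [Nat.choose_symm_of_eq_add (a := n - i) (b := n + i) (by omega)]
  rw [sum_congr rfl hsymm]
  refine sum_subset (filter_subset_filter _ (range_subset_range.2 (by omega))) fun i hi hi' => ?_
  simp only [mem_filter, mem_range, not_and] at hi hi'
  rw [Nat.choose_eq_zero_of_lt (by grind), Nat.cast_zero, mul_zero]

def oddCubeAntidiff (n i : ℕ) : ℤ :=
  ((2 * n - 1) * i ^ 4 + (2 * n - 1) * (2 * n - 3) * i ^ 3
    + (2 * n ^ 3 - 9 * n ^ 2 + 7 * n - 2) * i ^ 2 + 2 * n ^ 2 * (n - 1) ^ 2) * (2 * n).choose (n + i)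

theorem oddCubeAntidiff_sub_add_two (n i : ℕ) :
    oddCubeAntidiff n i - oddCubeAntidiff n (i + 2)
      = 2 * (2 * n - 1) * (2 * n - 3) * i ^ 3 * (2 * n).choose (n + i) := by
  have hpos : ((n : ℤ) + i + 1) * ((n : ℤ) + i + 2) ≠ 0 := by positivity
  apply mul_left_cancel₀ hpos
  have h := Nat.cast_choose_add_two_mul (R := ℤ) (2 * n) (n + i)
  unfold oddCubeAntidiff
  push_cast at h ⊢
  rw [← add_assoc]
  linear_combination (-((2 * (n : ℤ) - 1) * ((i : ℤ) + 2) ^ 4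
      + (2 * (n : ℤ) - 1) * (2 * (n : ℤ) - 3) * ((i : ℤ) + 2) ^ 3
      + (2 * (n : ℤ) ^ 3 - 9 * (n : ℤ) ^ 2 + 7 * (n : ℤ) - 2) * ((i : ℤ) + 2) ^ 2
      + 2 * (n : ℤ) ^ 2 * ((n : ℤ) - 1) ^ 2)) * h

theorem oddCubeAntidiff_eq_zero_of_lt {n i : ℕ} (h : n < i) : oddCubeAntidiff n i = 0 := by
  rw [oddCubeAntidiff, Nat.choose_eq_zero_of_lt (by omega), Nat.cast_zero, mul_zero]

theorem oddCubeAntidiff_one (n : ℕ) :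
    oddCubeAntidiff n 1 = (2 * n).choose n * (n ^ 2 * (2 * n ^ 2 - 4 * n + 1)) := by
  have h := Nat.cast_choose_succ_mul (R := ℤ) (2 * n) n
  push_cast at h
  rw [oddCubeAntidiff]
  linear_combination ((n : ℤ) * (2 * n ^ 2 - 4 * n + 1)) * h

/-- For every natural number `n`,
`2·(2n − 1)·(2n − 3) · ∑_{0 ≤ i ≤ n, i odd} i³ · C(2n, n−i) = C(2n, n) · n²·(2n² − 4n + 1)`,
as an identity of integers. -/
theorem stmt_4 (n : ℕ) :
    2 * (2 * (n : ℤ) - 1) * (2 * (n : ℤ) - 3) *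
        (∑ i ∈ (Finset.range (n + 1)).filter (fun i => Odd i),
          (i : ℤ) ^ 3 * (Nat.choose (2 * n) (n - i) : ℤ))
      = (Nat.choose (2 * n) n : ℤ) *
          ((n : ℤ) ^ 2 * (2 * (n : ℤ) ^ 2 - 4 * (n : ℤ) + 1)) := by
  have htelescope : ∀ j ∈ range (n + 1),
      2 * (2 * (n : ℤ) - 1) * (2 * n - 3) *
          (((2 * j + 1 : ℕ) : ℤ) ^ 3 * (2 * n).choose (n + (2 * j + 1)))
        = oddCubeAntidiff n (2 * j + 1) - oddCubeAntidiff n (2 * (j + 1) + 1) := fun j _ => by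
    rw [show 2 * (j + 1) + 1 = 2 * j + 1 + 2 by ring, oddCubeAntidiff_sub_add_two]
    ring
  rw [sum_filter_odd_mul_choose_sub n (fun i => (i : ℤ) ^ 3), mul_sum, sum_congr rfl htelescope,
    sum_range_sub' (fun j => oddCubeAntidiff n (2 * j + 1)),
    oddCubeAntidiff_eq_zero_of_lt (i := 2 * (n + 1) + 1) (by omega), sub_zero, oddCubeAntidiff_one]
end

section
/- Let α be a natural number and let P be a polynomial with rational coefficients such that for every natural number n, (∏_{j=0}^{α} (2n − 2j − 1)) · (∑_{0 ≤ i ≤ n, i even} i^{2α+1} · C(2n, n−i)) = C(2n, n) · P(n). Then for every natural number n, (∏_{j=0}^{α+1} (2n − 2j − 1)) · (∑_{0 ≤ i ≤ n, i even} i^{2α+3} · C(2n, n−i)) = C(2n, n) · n² · ((2n − 2α − 3)·P(n) − (2n − 1)·P(n−1)), where P is evaluated at the rational numbers n and n − 1. -/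
/-!
Write `T_k(n) = ∑_{i ≤ n, i even} i^k C(2n, n-i)`. Since `(n+1)² - i² = (n+1-i)(n+1+i)` and
`(n+1-i)(n+1+i) C(2n+2, n+1-i) = (2n+2)(2n+1) C(2n, n-i)`, the moments satisfy
`T_{k+2}(n+1) = (n+1)² T_k(n+1) - (2n+2)(2n+1) T_k(n)`.
The products `D_α(n) = ∏_{j ≤ α} (2n - 2j - 1)` satisfy
`D_{α+1}(n+1) = (2n-2α-1) D_α(n+1) = (2n+1) D_α(n)`, and `(n+1) C(2n+2, n+1) = 2(2n+1) C(2n,n)`;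
so multiplying the recurrence by `D_{α+1}(n+1)` turns the hypothesis at `n+1` and at `n` into the
claim at `n+1`.
-/

open Finset

theorem Nat.succ_mul_sub_mul_choose_add_two (M j : ℕ) :
    (j + 1) * (M + 1 - j) * (M + 2).choose (j + 1) = (M + 2) * (M + 1) * M.choose j := by
  have h := Nat.choose_succ_right_eq (M + 2) (j + 1)
  rw [show M + 2 - (j + 1) = M + 1 - j by omega] at h
  calc (j + 1) * (M + 1 - j) * (M + 2).choose (j + 1)
      = (M + 2).choose (j + 2) * (j + 2) * (j + 1) := by rw [h]; ring
    _ = (M + 2) * ((M + 1) * M.choose j) := by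
      rw [Nat.add_one_mul_choose_eq M j, ← mul_assoc, Nat.add_one_mul_choose_eq (M + 1) (j + 1)]
    _ = (M + 2) * (M + 1) * M.choose j := by ring

theorem Nat.sq_mul_choose_add_mul_choose {n i : ℕ} (hi : i ≤ n) :
    i ^ 2 * (2 * n + 2).choose (n + 1 - i) + (2 * n + 2) * (2 * n + 1) * (2 * n).choose (n - i)
      = (n + 1) ^ 2 * (2 * n + 2).choose (n + 1 - i) := by
  have h := Nat.succ_mul_sub_mul_choose_add_two (2 * n) (n - i)
  rw [show n - i + 1 = n + 1 - i by omega, show 2 * n + 1 - (n - i) = n + 1 + i by omega] at h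
  have hsq : (n + 1) ^ 2 = i ^ 2 + (n + 1 - i) * (n + 1 + i) := by
    obtain ⟨d, rfl⟩ := Nat.exists_eq_add_of_le hi
    rw [show i + d + 1 - i = d + 1 by omega]
    ring
  rw [hsq, ← h]
  ring

def binomMoment (p : ℕ → Prop) [DecidablePred p] (k n : ℕ) : ℕ :=
  ∑ i ∈ (range (n + 1)).filter p, i ^ k * (2 * n).choose (n - i)

theorem binomMoment_add_two_succ (p : ℕ → Prop) [DecidablePred p] (k n : ℕ) :
    binomMoment p (k + 2) (n + 1) + (2 * n + 2) * (2 * n + 1) * binomMoment p k n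
      = (n + 1) ^ 2 * binomMoment p k (n + 1) := by
  simp only [binomMoment, sum_filter, mul_sum]
  rw [sum_range_succ _ (n + 1), sum_range_succ _ (n + 1), add_right_comm, ← sum_add_distrib,
    mul_add]
  congr 1
  · refine sum_congr rfl fun i hi => ?_
    have h := Nat.sq_mul_choose_add_mul_choose (Nat.lt_succ_iff.mp (mem_range.mp hi))
    split_ifs
    · rw [mul_one]
      linear_combination i ^ k * h
    · simp
  · split_ifs <;> ring

theorem cast_binomMoment {R : Type*} [CommSemiring R] (p : ℕ → Prop) [DecidablePred p]
    (k n : ℕ) :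
    (binomMoment p k n : R)
      = ∑ i ∈ (range (n + 1)).filter p, (i : R) ^ k * ((2 * n).choose (n - i) : R) := by
  simp [binomMoment]

def oddDescProd (m n : ℕ) : ℤ :=
  ∏ j ∈ range m, (2 * (n : ℤ) - 2 * (j : ℤ) - 1)

theorem oddDescProd_succ (m n : ℕ) :
    oddDescProd (m + 1) n = oddDescProd m n * (2 * n - 2 * m - 1) :=
  prod_range_succ _ _

theorem oddDescProd_succ_succ (m n : ℕ) :
    oddDescProd (m + 1) (n + 1) = oddDescProd m n * (2 * n + 1) := by
  rw [oddDescProd, oddDescProd, prod_range_succ']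
  push_cast
  congr 1
  · exact prod_congr rfl fun j _ => by ring
  · ring

theorem oddDescProd_mul_binomMoment_add_two {R : Type*} [CommRing R] (p : ℕ → Prop)
    [DecidablePred p] (m k : ℕ) (f : R → R)
    (hf : ∀ n : ℕ, (oddDescProd m n : R) * binomMoment p k n = n.centralBinom * f n) (n : ℕ) :
    (oddDescProd (m + 1) n : R) * binomMoment p (k + 2) n
      = n.centralBinom * n ^ 2 * ((2 * n - 2 * m - 1) * f n - (2 * n - 1) * f (n - 1)) := by
  cases n with
  | zero => simp [binomMoment, sum_filter]
  | succ n =>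
    have hrec : (binomMoment p (k + 2) (n + 1) : R)
          + (2 * n + 2) * (2 * n + 1) * binomMoment p k n
        = (n + 1) ^ 2 * binomMoment p k (n + 1) := by
      exact_mod_cast congrArg (Nat.cast : ℕ → R) (binomMoment_add_two_succ p k n)
    have hcentral : ((n : R) + 1) * (n + 1).centralBinom = 2 * (2 * n + 1) * n.centralBinom := by
      exact_mod_cast congrArg (Nat.cast : ℕ → R) (Nat.succ_mul_centralBinom_succ n)
    have hprod :
        (oddDescProd (m + 1) (n + 1) : R) = oddDescProd m (n + 1) * (2 * n - 2 * m + 1) := by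
      rw [oddDescProd_succ]; push_cast; ring
    have hprod' : (oddDescProd (m + 1) (n + 1) : R) = oddDescProd m n * (2 * n + 1) := by
      rw [oddDescProd_succ_succ]; push_cast; ring
    have hnext := hf (n + 1)
    have hprev := hf n
    push_cast at hnext ⊢
    rw [add_sub_cancel_right]
    linear_combination (oddDescProd (m + 1) (n + 1) : R) * hrec
      + ((n : R) + 1) ^ 2 * binomMoment p k (n + 1) * hprod
      - (2 * (n : R) + 2) * (2 * n + 1) * binomMoment p k n * hprod'
      + ((n : R) + 1) ^ 2 * (2 * n - 2 * m + 1) * hnext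
      - (2 * (n : R) + 2) * (2 * n + 1) ^ 2 * hprev
      + ((n : R) + 1) * (2 * n + 1) * f n * hcentral

/-- Let `α` be a natural number and `P` a polynomial with rational coefficients such that
for every natural number `n`,
`(∏_{j=0}^{α} (2n − 2j − 1)) · (∑_{0 ≤ i ≤ n, i even} i^{2α+1} · C(2n, n−i)) = C(2n, n) · P(n)`.
Then for every natural number `n`,
`(∏_{j=0}^{α+1} (2n − 2j − 1)) · (∑_{0 ≤ i ≤ n, i even} i^{2α+3} · C(2n, n−i))
  = C(2n, n) · n² · ((2n − 2α − 3)·P(n) − (2n − 1)·P(n−1))`. -/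
theorem stmt_7 (α : ℕ) (P : Polynomial ℚ)
    (hP : ∀ n : ℕ,
      (((∏ j ∈ Finset.range (α + 1), (2 * (n : ℤ) - 2 * (j : ℤ) - 1)) : ℤ) : ℚ) *
          (∑ i ∈ (Finset.range (n + 1)).filter (fun i => Even i),
            (i : ℚ) ^ (2 * α + 1) * (Nat.choose (2 * n) (n - i) : ℚ))
        = (Nat.choose (2 * n) n : ℚ) * P.eval (n : ℚ)) :
    ∀ n : ℕ,
      (((∏ j ∈ Finset.range (α + 2), (2 * (n : ℤ) - 2 * (j : ℤ) - 1)) : ℤ) : ℚ) *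
          (∑ i ∈ (Finset.range (n + 1)).filter (fun i => Even i),
            (i : ℚ) ^ (2 * α + 3) * (Nat.choose (2 * n) (n - i) : ℚ))
        = (Nat.choose (2 * n) n : ℚ) * (n : ℚ) ^ 2 *
            ((2 * (n : ℚ) - 2 * (α : ℚ) - 3) * P.eval (n : ℚ)
              - (2 * (n : ℚ) - 1) * P.eval ((n : ℚ) - 1)) := by
  intro n
  have h := oddDescProd_mul_binomMoment_add_two Even (α + 1) (2 * α + 1) P.eval
    (fun m => by
      simpa [cast_binomMoment, oddDescProd, Nat.centralBinom_eq_two_mul_choose] using hP m) n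
  simp only [cast_binomMoment, oddDescProd, Nat.centralBinom_eq_two_mul_choose] at h
  rw [show α + 1 + 1 = α + 2 from rfl, show 2 * α + 1 + 2 = 2 * α + 3 from rfl] at h
  push_cast at h ⊢
  linear_combination h
end

section
/- Let k₁ and k₂ be odd positive integers and let ε₁, ε₂ ∈ {0, 1}. Then there exists a polynomial p with rational coefficients such that: p(−x) = −p(x) for all x; p has degree exactly k₁ + k₂ + 1; the leading coefficient of p equals 1 / (2·(k₂ + 1)·C(k₁ + k₂ + 1, k₂ + 1)); and for every integer n ≥ 1 with n ≡ ε₁ + ε₂ (mod 2), ∑ i₁^{k₁} · i₂^{k₂} = p(n), where the sum ranges over all pairs of integers i₁, i₂ ≥ 1 with i₁ + i₂ = n, i₁ ≡ ε₁ (mod 2) and i₂ ≡ ε₂ (mod 2). -/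
/-!
Put `F(x, i) = i ^ k₁ * (x - i) ^ k₂`. Rescaled Bernoulli polynomials `Φₘ` (`powSumStepTwo`) satisfy
`Φₘ(y + 2) - Φₘ(y) = (y + 2) ^ m`; expanding `(x - i) ^ k₂` binomially, they assemble into
`G(x, a, b)` (`powConvAntideriv`), which for `b - a ∈ 2ℕ` is the sum of `F(x, i)` over `a < i ≤ b`,
`i ≡ b (mod 2)`. So `p(x) = G(x, ε₁ - 2, x - ε₂)` interpolates the sums. The symmetry
`Bₙ(1 - t) = (-1)ⁿ Bₙ(t)` gives `G(-x, -b, -a) = (-1) ^ (k₁ + k₂) G(x, a - 2, b - 2)`: the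
reflection `i ↦ -i` of the range. As `F(x, ·)` vanishes at `0` and at `x`, the reflected range can
be shifted back, so `p` is odd when `k₁ + k₂` is even. The leading coefficient is half the Beta
integral `∑ⱼ (-1)ʲ C(k₂, j) / (k₁ + j + 1) = k₁! k₂! / (k₁ + k₂ + 1)!`.
-/

open Polynomial Finset
open scoped Nat

lemma Polynomial.natDegree_bernoulli (n : ℕ) : (Polynomial.bernoulli n).natDegree = n := by
  refine natDegree_eq_of_le_of_coeff_ne_zero ?_ (by simp [coeff_bernoulli])
  rw [natDegree_le_iff_coeff_eq_zero]
  intro i hi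
  simp [coeff_bernoulli, not_le.mpr (by exact_mod_cast hi : n < i)]

lemma Polynomial.leadingCoeff_bernoulli (n : ℕ) : (Polynomial.bernoulli n).leadingCoeff = 1 := by
  simp [leadingCoeff, natDegree_bernoulli, coeff_bernoulli]

lemma sum_range_choose_mul_neg_one_pow_div (a b : ℕ) :
    ∑ j ∈ range (b + 1), (b.choose j : ℚ) * ((-1) ^ j / (a + j + 1)) =
      a ! * b ! / (a + b + 1)! := by
  induction b generalizing a with
  | zero => simp [Nat.factorial_succ, field]
  | succ b ih =>
    rw [sum_choose_succ_mul (fun i _ => ((-1 : ℚ) ^ i / (a + i + 1))) b, ih a]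
    have shift : ∑ i ∈ range (b + 1), (b.choose i : ℚ) * ((-1) ^ (i + 1) / (a + (i + 1 : ℕ) + 1))
        = -((a + 1)! * b ! / (a + 1 + b + 1)!) := by
      rw [← ih (a + 1), ← sum_neg_distrib]
      refine sum_congr rfl fun i _ => ?_
      push_cast
      ring
    rw [shift, show a + 1 + b + 1 = a + b + 1 + 1 by ring,
      show a + (b + 1) + 1 = a + b + 1 + 1 by ring, Nat.factorial_succ a, Nat.factorial_succ b,
      Nat.factorial_succ (a + b + 1)]
    push_cast
    field_simp
    ring

namespace ParityConvolution

noncomputable def powSumStepTwo (m : ℕ) : ℚ[X] :=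
  C ((2 : ℚ) ^ m / (m + 1)) * (Polynomial.bernoulli (m + 1)).comp (C (1 / 2) * X + C 1)

lemma eval_powSumStepTwo (m : ℕ) (y : ℚ) :
    (powSumStepTwo m).eval y =
      2 ^ m / (m + 1) * (Polynomial.bernoulli (m + 1)).eval (y / 2 + 1) := by
  simp [powSumStepTwo, eval_comp, div_eq_inv_mul]

lemma powSumStepTwo_eval_add_two (m : ℕ) (y : ℚ) :
    (powSumStepTwo m).eval (y + 2) = (powSumStepTwo m).eval y + (y + 2) ^ m := by
  have h := bernoulli_eval_one_add (m + 1) (y / 2 + 1)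
  rw [eval_powSumStepTwo, eval_powSumStepTwo, show (y + 2) / 2 + 1 = 1 + (y / 2 + 1) by ring, h,
    Nat.add_sub_cancel, show y + 2 = 2 * (y / 2 + 1) by ring, mul_pow]
  push_cast
  field_simp

lemma powSumStepTwo_eval_neg (m : ℕ) (y : ℚ) :
    (powSumStepTwo m).eval (-y) = (-1) ^ (m + 1) * (powSumStepTwo m).eval (y - 2) := by
  have h := bernoulli_eval_one_sub (m + 1) (y / 2)
  rw [eval_powSumStepTwo, eval_powSumStepTwo, show -y / 2 + 1 = 1 - y / 2 by ring, h,
    show (y - 2) / 2 + 1 = y / 2 by ring]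
  ring

lemma powSumStepTwo_telescope (m : ℕ) (a : ℚ) (T : ℕ) :
    (powSumStepTwo m).eval (a + 2 * T) - (powSumStepTwo m).eval a =
      ∑ t ∈ range T, (a + 2 * t + 2) ^ m := by
  induction T with
  | zero => simp
  | succ T ih =>
    rw [sum_range_succ, ← ih]
    push_cast
    rw [show a + 2 * (T + 1) = a + 2 * T + 2 by ring, powSumStepTwo_eval_add_two]
    ring

lemma natDegree_powSumStepTwo (m : ℕ) : (powSumStepTwo m).natDegree = m + 1 := by
  rw [powSumStepTwo, natDegree_C_mul (by positivity), natDegree_comp, natDegree_bernoulli,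
    natDegree_linear (by norm_num), mul_one]

lemma leadingCoeff_powSumStepTwo (m : ℕ) :
    (powSumStepTwo m).leadingCoeff = 1 / (2 * (m + 1)) := by
  rw [powSumStepTwo, leadingCoeff_mul, leadingCoeff_C,
    leadingCoeff_comp (by rw [natDegree_linear (by norm_num)]; norm_num), leadingCoeff_bernoulli,
    natDegree_bernoulli, leadingCoeff_linear (by norm_num), pow_succ]
  field_simp
  rw [← mul_pow]
  norm_num

lemma natDegree_powSumStepTwo_comp (m : ℕ) (e : ℚ) :
    ((powSumStepTwo m).comp (X - C e)).natDegree = m + 1 := by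
  rw [natDegree_comp, natDegree_X_sub_C, natDegree_powSumStepTwo, mul_one]

lemma coeff_powSumStepTwo_comp (m : ℕ) (e : ℚ) :
    ((powSumStepTwo m).comp (X - C e)).coeff (m + 1) = 1 / (2 * (m + 1)) := by
  rw [← natDegree_powSumStepTwo_comp m e, ← leadingCoeff,
    leadingCoeff_comp (by rw [natDegree_X_sub_C]; exact one_ne_zero), leadingCoeff_X_sub_C,
    one_pow, mul_one, leadingCoeff_powSumStepTwo]

variable (k₁ k₂ : ℕ)

noncomputable def powConvAntideriv (x a b : ℚ) : ℚ :=
  ∑ j ∈ range (k₂ + 1), k₂.choose j * (-1) ^ j * x ^ (k₂ - j) *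
    ((powSumStepTwo (k₁ + j)).eval b - (powSumStepTwo (k₁ + j)).eval a)

lemma sum_choose_mul_pow_eq (x i : ℚ) :
    ∑ j ∈ range (k₂ + 1), k₂.choose j * (-1) ^ j * x ^ (k₂ - j) * i ^ (k₁ + j) =
      i ^ k₁ * (x - i) ^ k₂ := by
  rw [sub_eq_neg_add, add_pow, mul_sum]
  refine sum_congr rfl fun j _ => ?_
  rw [neg_pow, pow_add]
  ring

lemma powConvAntideriv_add_two_mul (x a : ℚ) (T : ℕ) :
    powConvAntideriv k₁ k₂ x a (a + 2 * T) =
      ∑ t ∈ range T, (a + 2 * t + 2) ^ k₁ * (x - (a + 2 * t + 2)) ^ k₂ := by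
  simp_rw [powConvAntideriv, powSumStepTwo_telescope, mul_sum]
  rw [sum_comm]
  exact sum_congr rfl fun t _ => sum_choose_mul_pow_eq k₁ k₂ x _

lemma powConvAntideriv_sub_two_self (x i : ℚ) :
    powConvAntideriv k₁ k₂ x (i - 2) i = i ^ k₁ * (x - i) ^ k₂ := by
  simpa using powConvAntideriv_add_two_mul k₁ k₂ x (i - 2) 1

lemma powConvAntideriv_add (x a b c : ℚ) :
    powConvAntideriv k₁ k₂ x a b + powConvAntideriv k₁ k₂ x b c =
      powConvAntideriv k₁ k₂ x a c := by
  rw [powConvAntideriv, powConvAntideriv, powConvAntideriv, ← sum_add_distrib]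
  refine sum_congr rfl fun j _ => ?_
  ring

lemma powConvAntideriv_neg (x a b : ℚ) :
    powConvAntideriv k₁ k₂ (-x) (-b) (-a) =
      (-1) ^ (k₁ + k₂) * powConvAntideriv k₁ k₂ x (a - 2) (b - 2) := by
  rw [powConvAntideriv, powConvAntideriv, mul_sum]
  refine sum_congr rfl fun j hj => ?_
  have hj : j ≤ k₂ := Nat.lt_succ_iff.mp (mem_range.mp hj)
  rw [powSumStepTwo_eval_neg, powSumStepTwo_eval_neg, neg_pow x,
    show k₁ + k₂ = (k₂ - j) + (k₁ + j) by omega]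
  ring

@[simp]
lemma powConvAntideriv_self (x a : ℚ) : powConvAntideriv k₁ k₂ x a a = 0 := by
  simp [powConvAntideriv]

lemma powConvAntideriv_swap (x a b : ℚ) :
    powConvAntideriv k₁ k₂ x b a = -powConvAntideriv k₁ k₂ x a b := by
  linear_combination powConvAntideriv_add k₁ k₂ x a b a + powConvAntideriv_self k₁ k₂ x a

noncomputable def parityConvPoly (ε₁ ε₂ : ℕ) : ℚ[X] :=
  ∑ j ∈ range (k₂ + 1), C (k₂.choose j * (-1) ^ j : ℚ) * X ^ (k₂ - j) *
    ((powSumStepTwo (k₁ + j)).comp (X - C (ε₂ : ℚ)) -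
      C ((powSumStepTwo (k₁ + j)).eval ((ε₁ : ℚ) - 2)))

lemma eval_parityConvPoly (ε₁ ε₂ : ℕ) (x : ℚ) :
    (parityConvPoly k₁ k₂ ε₁ ε₂).eval x = powConvAntideriv k₁ k₂ x (ε₁ - 2) (x - ε₂) := by
  simp [parityConvPoly, powConvAntideriv, eval_finsetSum, eval_comp, mul_assoc]

lemma powConvAntideriv_gap_bottom (hk₁ : k₁ ≠ 0) {ε : ℕ} (hε : ε ≤ 1) (x : ℚ) :
    powConvAntideriv k₁ k₂ x (ε - 2) (-ε) = 0 := by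
  interval_cases ε
  · simpa [zero_pow hk₁] using powConvAntideriv_sub_two_self k₁ k₂ x 0
  · norm_num

lemma powConvAntideriv_gap_top (hk₂ : k₂ ≠ 0) {ε : ℕ} (hε : ε ≤ 1) (x : ℚ) :
    powConvAntideriv k₁ k₂ x (x + ε - 2) (x - ε) = 0 := by
  interval_cases ε
  · simpa [zero_pow hk₂] using powConvAntideriv_sub_two_self k₁ k₂ x x
  · rw [show x + (1 : ℕ) - 2 = x - (1 : ℕ) by push_cast; ring, powConvAntideriv_self]

lemma parityConvPoly_eval_neg (hk₁ : k₁ ≠ 0) (hk₂ : k₂ ≠ 0) (hk : Even (k₁ + k₂))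
    {ε₁ ε₂ : ℕ} (hε₁ : ε₁ ≤ 1) (hε₂ : ε₂ ≤ 1) (x : ℚ) :
    (parityConvPoly k₁ k₂ ε₁ ε₂).eval (-x) = -(parityConvPoly k₁ k₂ ε₁ ε₂).eval x := by
  have reflect : powConvAntideriv k₁ k₂ (-x) (ε₁ - 2) (-x - ε₂) =
      powConvAntideriv k₁ k₂ x (x + ε₂ - 2) (-ε₁) := by
    rw [show (ε₁ : ℚ) - 2 = -(2 - ε₁) by ring, show -x - ε₂ = -(x + ε₂) by ring,
      powConvAntideriv_neg, hk.neg_one_pow, one_mul, sub_sub_cancel_left]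
  have split : powConvAntideriv k₁ k₂ x (ε₁ - 2) (x - ε₂) =
      powConvAntideriv k₁ k₂ x (ε₁ - 2) (-ε₁) + powConvAntideriv k₁ k₂ x (-ε₁) (x + ε₂ - 2) +
        powConvAntideriv k₁ k₂ x (x + ε₂ - 2) (x - ε₂) := by
    rw [powConvAntideriv_add, powConvAntideriv_add]
  rw [eval_parityConvPoly, eval_parityConvPoly, reflect, powConvAntideriv_swap, split,
    powConvAntideriv_gap_bottom k₁ k₂ hk₁ hε₁, powConvAntideriv_gap_top k₁ k₂ hk₂ hε₂]
  ring

lemma sum_Ioo_eq_parityConvPoly_eval (hk₁ : k₁ ≠ 0) (hk₂ : k₂ ≠ 0) {ε₁ ε₂ : ℕ} (hε₁ : ε₁ ≤ 1)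
    (hε₂ : ε₂ ≤ 1) {n : ℕ} (hn : n % 2 = (ε₁ + ε₂) % 2) :
    ∑ i ∈ Ioo 0 n, (if i % 2 = ε₁ ∧ (n - i) % 2 = ε₂ then
      (i : ℚ) ^ k₁ * ((n - i : ℕ) : ℚ) ^ k₂ else 0) =
        (parityConvPoly k₁ k₂ ε₁ ε₂).eval (n : ℚ) := by
  obtain ⟨T, hT⟩ : ∃ T : ℕ, n + 2 = ε₁ + ε₂ + 2 * T := ⟨(n + 2 - ε₁ - ε₂) / 2, by omega⟩
  have hTq : (n : ℚ) - ε₂ = (ε₁ - 2) + 2 * T := by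
    have := congrArg (Nat.cast (R := ℚ)) hT
    push_cast at this
    linarith
  have term_eq (i : ℕ) (hi : i ≤ n) (hc : i % 2 = ε₁ ∧ (n - i) % 2 = ε₂) :
      (if i % 2 = ε₁ ∧ (n - i) % 2 = ε₂ then (i : ℚ) ^ k₁ * ((n - i : ℕ) : ℚ) ^ k₂ else 0) =
        (i : ℚ) ^ k₁ * (n - i : ℚ) ^ k₂ := by
    rw [if_pos hc, Nat.cast_sub hi]
  rw [eval_parityConvPoly, hTq, powConvAntideriv_add_two_mul]
  simp_rw [show ∀ t : ℕ, (ε₁ : ℚ) - 2 + 2 * t + 2 = ((ε₁ + 2 * t : ℕ) : ℚ) by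
    intro t; push_cast; ring]
  have mem_of_ne (t : ℕ) (ht : t ∈ range T)
      (hne : ((ε₁ + 2 * t : ℕ) : ℚ) ^ k₁ * (n - ((ε₁ + 2 * t : ℕ) : ℚ)) ^ k₂ ≠ 0) :
      ε₁ + 2 * t ∈ Ioo 0 n := by
    have h0 : ε₁ + 2 * t ≠ 0 := by rintro h; simp [h, zero_pow hk₁] at hne
    have hn' : ε₁ + 2 * t ≠ n := by rintro h; simp [h, zero_pow hk₂] at hne
    rw [mem_range] at ht
    rw [mem_Ioo]
    omega
  symm
  refine sum_bij_ne_zero (fun t _ _ => ε₁ + 2 * t) mem_of_ne (fun _ _ _ _ _ _ h => by omega) ?_ ?_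
  · intro i hi hne
    rw [mem_Ioo] at hi
    have hc : i % 2 = ε₁ ∧ (n - i) % 2 = ε₂ := by
      by_contra hc
      exact hne (if_neg hc)
    refine ⟨i / 2, mem_range.mpr (by omega), ?_, by omega⟩
    rwa [show ε₁ + 2 * (i / 2) = i by omega, ← term_eq i hi.2.le hc]
  · intro t ht hne
    have hle := (mem_Ioo.mp (mem_of_ne t ht hne)).2.le
    rw [term_eq _ hle ⟨by omega, by omega⟩]

lemma natDegree_parityConvPoly_le (ε₁ ε₂ : ℕ) :
    (parityConvPoly k₁ k₂ ε₁ ε₂).natDegree ≤ k₁ + k₂ + 1 := by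
  refine natDegree_sum_le_of_forall_le _ _ fun j hj => ?_
  have hj : j ≤ k₂ := Nat.lt_succ_iff.mp (mem_range.mp hj)
  refine (natDegree_mul_le).trans ?_
  rw [natDegree_sub_C, natDegree_powSumStepTwo_comp]
  have := natDegree_C_mul_X_pow_le (k₂.choose j * (-1) ^ j : ℚ) (k₂ - j)
  omega

lemma coeff_parityConvPoly (ε₁ ε₂ : ℕ) :
    (parityConvPoly k₁ k₂ ε₁ ε₂).coeff (k₁ + k₂ + 1) = k₁ ! * k₂ ! / (2 * (k₁ + k₂ + 1)!) := by
  rw [div_mul_eq_div_div_swap, ← sum_range_choose_mul_neg_one_pow_div, sum_div, parityConvPoly,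
    finsetSum_coeff]
  refine sum_congr rfl fun j hj => ?_
  have hj : j ≤ k₂ := Nat.lt_succ_iff.mp (mem_range.mp hj)
  rw [mul_assoc, coeff_C_mul, coeff_X_pow_mul', if_pos (by omega),
    show k₁ + k₂ + 1 - (k₂ - j) = k₁ + j + 1 by omega, coeff_sub, coeff_C_of_ne_zero (by omega),
    sub_zero, coeff_powSumStepTwo_comp]
  push_cast
  field_simp

lemma natDegree_parityConvPoly (ε₁ ε₂ : ℕ) :
    (parityConvPoly k₁ k₂ ε₁ ε₂).natDegree = k₁ + k₂ + 1 :=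
  natDegree_eq_of_le_of_coeff_ne_zero (natDegree_parityConvPoly_le k₁ k₂ ε₁ ε₂)
    (by rw [coeff_parityConvPoly]; positivity)

lemma degree_parityConvPoly (ε₁ ε₂ : ℕ) :
    (parityConvPoly k₁ k₂ ε₁ ε₂).degree = (k₁ + k₂ + 1 : ℕ) :=
  (degree_eq_iff_natDegree_eq_of_pos (Nat.succ_pos _)).mpr
    (natDegree_parityConvPoly k₁ k₂ ε₁ ε₂)

lemma leadingCoeff_parityConvPoly (ε₁ ε₂ : ℕ) :
    (parityConvPoly k₁ k₂ ε₁ ε₂).leadingCoeff =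
      1 / (2 * ((k₂ : ℚ) + 1) * ((k₁ + k₂ + 1).choose (k₂ + 1) : ℚ)) := by
  have h := Nat.choose_mul_factorial_mul_factorial (show k₂ + 1 ≤ k₁ + k₂ + 1 by omega)
  rw [show k₁ + k₂ + 1 - (k₂ + 1) = k₁ by omega, Nat.factorial_succ] at h
  rw [leadingCoeff, natDegree_parityConvPoly, coeff_parityConvPoly, ← h]
  push_cast
  field_simp

end ParityConvolution

open ParityConvolution in
/-- Let `k₁` and `k₂` be odd positive integers and `ε₁, ε₂ ∈ {0, 1}`. Then there exists a
polynomial `p` with rational coefficients such that `p` is odd (`p(−x) = −p(x)`), `p` has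
degree exactly `k₁ + k₂ + 1`, the leading coefficient of `p` equals
`1 / (2·(k₂ + 1)·C(k₁ + k₂ + 1, k₂ + 1))`, and for every integer `n ≥ 1` with
`n ≡ ε₁ + ε₂ (mod 2)`, the sum `∑ i₁^{k₁} · i₂^{k₂}` over all pairs of integers
`i₁, i₂ ≥ 1` with `i₁ + i₂ = n`, `i₁ ≡ ε₁ (mod 2)` and `i₂ ≡ ε₂ (mod 2)` equals `p(n)`. -/
theorem stmt_8 (k₁ k₂ : ℕ) (hk₁pos : 0 < k₁) (hk₂pos : 0 < k₂)
    (hk₁ : Odd k₁) (hk₂ : Odd k₂)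
    (ε₁ ε₂ : ℕ) (hε₁ : ε₁ ≤ 1) (hε₂ : ε₂ ≤ 1) :
    ∃ p : Polynomial ℚ,
      (∀ x : ℚ, p.eval (-x) = - p.eval x) ∧
      p.degree = (k₁ + k₂ + 1 : ℕ) ∧
      p.leadingCoeff = 1 / (2 * ((k₂ : ℚ) + 1) * (Nat.choose (k₁ + k₂ + 1) (k₂ + 1) : ℚ)) ∧
      ∀ n : ℕ, 1 ≤ n → n % 2 = (ε₁ + ε₂) % 2 →
        (∑ i ∈ Finset.Ioo 0 n,
          if i % 2 = ε₁ ∧ (n - i) % 2 = ε₂ then (i : ℚ) ^ k₁ * ((n - i : ℕ) : ℚ) ^ k₂ else 0)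
          = p.eval (n : ℚ) := by
  have heven : Even (k₁ + k₂) := hk₁.add_odd hk₂
  exact ⟨parityConvPoly k₁ k₂ ε₁ ε₂,
    parityConvPoly_eval_neg k₁ k₂ hk₁pos.ne' hk₂pos.ne' heven hε₁ hε₂,
    degree_parityConvPoly k₁ k₂ ε₁ ε₂, leadingCoeff_parityConvPoly k₁ k₂ ε₁ ε₂,
    fun _ _ hn => sum_Ioo_eq_parityConvPoly_eval k₁ k₂ hk₁pos.ne' hk₂pos.ne' hε₁ hε₂ hn⟩
end

section
/- Let m ≥ 1 and let k₁, …, k_m be odd positive integers; set D = k₁ + ⋯ + k_m + m − 1. Then there exists a positive rational number c such that for every choice of parities ε₁, …, ε_m ∈ {0, 1} there exists a polynomial p with rational coefficients satisfying: p(−x) = −p(x) for all x; p has degree exactly D; the leading coefficient of p equals c; and for every integer n ≥ 1 with n ≡ ε₁ + ⋯ + ε_m (mod 2), ∑ i₁^{k₁} · i₂^{k₂} ⋯ i_m^{k_m} = p(n), where the sum ranges over all m-tuples of integers i₁, …, i_m ≥ 1 with i₁ + ⋯ + i_m = n and i_j ≡ ε_j (mod 2) for each j. -/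
section Anon9
open Polynomial Finset


lemma exLambda : ∀ (N : ℕ) (g : ℚ[X]), g.natDegree ≤ N →
    ∃ G : ℚ[X], (∀ x : ℚ, G.eval x - G.eval (x-1) = g.eval x) ∧ G.eval 0 = g.eval 0 ∧
      G.natDegree ≤ g.natDegree + 1 ∧
      (g ≠ 0 → G.coeff (g.natDegree + 1) = g.leadingCoeff / (g.natDegree + 1)) := by
  intro N
  induction N with
  | zero =>
    intro g hg
    have hgC : g = C (g.coeff 0) := eq_C_of_natDegree_le_zero hg
    refine ⟨C (g.coeff 0) * (X + 1), ?_, ?_, ?_, ?_⟩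
    · intro x; rw [hgC]; simp; ring
    · rw [hgC]; simp
    · refine (natDegree_mul_le).trans ?_
      have h1 : (X + 1 : ℚ[X]).natDegree = 1 := by simpa using natDegree_X_add_C (1:ℚ)
      simp [h1]
    · intro hne
      have h0 : g.natDegree = 0 := le_antisymm hg (Nat.zero_le _)
      have hl : g.leadingCoeff = g.coeff 0 := by rw [leadingCoeff, h0]
      rw [h0, hl]
      have h2 : (C (g.coeff 0) * (X + 1)).coeff 1 = g.coeff 0 := by
        rw [mul_add, mul_one]; simp [coeff_C]
      rw [h2]; norm_num
  | succ N IH =>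
    intro g hg
    by_cases hle : g.natDegree ≤ N
    · exact IH g hle
    · have hD : g.natDegree = N + 1 := le_antisymm hg (not_le.mp hle)
      have hgne : g ≠ 0 := by
        intro h; rw [h] at hD; simp at hD
      set D := N + 1 with hDdef
      set c' : ℚ := g.leadingCoeff / (D + 1) with hc'
      have hlc : g.leadingCoeff ≠ 0 := leadingCoeff_ne_zero.mpr hgne
      have hc'ne : c' ≠ 0 := by
        apply div_ne_zero hlc; positivity
      set ΔA : ℚ[X] := C c' * (X ^ (D+1) - (X - 1) ^ (D+1)) with hΔA
      have hcoeffsub : ∀ j, ((X ^ (D+1) - (X - 1) ^ (D+1) : ℚ[X])).coeff j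
          = (if j = D + 1 then 1 else 0) - (-1)^(D+1-j) * ((D+1).choose j) := by
        intro j
        rw [coeff_sub, coeff_X_pow]
        congr 1
        have := Polynomial.coeff_X_add_C_pow (-1 : ℚ) (D+1) j
        simpa [sub_eq_add_neg] using this
      have hΔAcoeff : ∀ j, ΔA.coeff j = c' * ((if j = D + 1 then 1 else 0) - (-1)^(D+1-j) * ((D+1).choose j)) := by
        intro j; rw [hΔA, coeff_C_mul, hcoeffsub]
      have hΔAD : ΔA.coeff D = g.leadingCoeff := by
        rw [hΔAcoeff]
        have h1 : D + 1 - D = 1 := by omega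
        have h2 : (D+1).choose D = D + 1 := Nat.choose_succ_self_right D
        rw [h1, h2, if_neg (by omega)]
        rw [hc']
        push_cast
        field_simp
        ring
      set h : ℚ[X] := g - ΔA with hh
      have hhdeg : h.natDegree ≤ N := by
        apply natDegree_le_iff_coeff_eq_zero.mpr
        intro j hj
        rw [hh, coeff_sub, hΔAcoeff]
        rcases Nat.lt_or_ge j (D+1) with hj1 | hj1
        · have hjD : j = D := by omega
          subst hjD
          have h1 : D + 1 - D = 1 := by omega
          have h2 : (D+1).choose D = D + 1 := Nat.choose_succ_self_right D
          rw [h1, h2, if_neg (by omega)]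
          have hgj : g.coeff D = g.leadingCoeff := by rw [leadingCoeff, hD]
          rw [hgj, hc']
          push_cast
          field_simp
          ring
        · rcases Nat.eq_or_lt_of_le hj1 with hj2 | hj2
          · have hgj : g.coeff j = 0 := coeff_eq_zero_of_natDegree_lt (by omega)
            rw [if_pos hj2.symm, hgj, ← hj2]
            simp [Nat.choose_self]
          · have hgj : g.coeff j = 0 := coeff_eq_zero_of_natDegree_lt (by omega)
            rw [if_neg (by omega), hgj, Nat.choose_eq_zero_of_lt (by omega)]
            simp
      obtain ⟨Gh, hGh1, hGh2, hGh3, _⟩ := IH h hhdeg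
      refine ⟨C c' * X ^ (D+1) + Gh + C (g.eval 0 - (C c' * X ^ (D+1) + Gh).eval 0), ?_, ?_, ?_, ?_⟩
      · intro x
        have key : Gh.eval x - Gh.eval (x-1) = g.eval x - c' * (x^(D+1) - (x-1)^(D+1)) := by
          rw [hGh1 x, hh]; simp [hΔA]
        simp only [eval_add, eval_mul, eval_C, eval_pow, eval_X]
        linear_combination key
      · simp
      · rw [hD]
        refine (natDegree_add_le _ _).trans (max_le ?_ (by simp))
        refine (natDegree_add_le _ _).trans (max_le ?_ (hGh3.trans (by omega)))
        refine (natDegree_mul_le).trans (by simp)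
      · intro _
        rw [hD, coeff_add, coeff_C, if_neg (by omega), coeff_add, coeff_C_mul, coeff_X_pow,
          if_pos rfl, coeff_eq_zero_of_natDegree_lt (by omega : Gh.natDegree < D + 1)]
        rw [hc']
        push_cast
        ring



noncomputable def lam (g : ℚ[X]) : ℚ[X] := Classical.choose (exLambda g.natDegree g le_rfl)

lemma lam_spec (g : ℚ[X]) : (∀ x : ℚ, (lam g).eval x - (lam g).eval (x-1) = g.eval x) ∧
    (lam g).eval 0 = g.eval 0 ∧ (lam g).natDegree ≤ g.natDegree + 1 ∧
    (g ≠ 0 → (lam g).coeff (g.natDegree + 1) = g.leadingCoeff / (g.natDegree + 1)) :=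
  Classical.choose_spec (exLambda g.natDegree g le_rfl)

lemma lam_diff (g : ℚ[X]) (x : ℚ) : (lam g).eval x - (lam g).eval (x-1) = g.eval x :=
  (lam_spec g).1 x

lemma lam_natDegree (g : ℚ[X]) (hg : g ≠ 0) : (lam g).natDegree = g.natDegree + 1 := by
  refine le_antisymm (lam_spec g).2.2.1 ?_
  apply le_natDegree_of_ne_zero
  rw [(lam_spec g).2.2.2 hg]
  apply div_ne_zero (leadingCoeff_ne_zero.mpr hg)
  positivity

lemma lam_leadingCoeff (g : ℚ[X]) (hg : g ≠ 0) :
    (lam g).leadingCoeff = g.leadingCoeff / (g.natDegree + 1) := by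
  rw [leadingCoeff, lam_natDegree g hg, (lam_spec g).2.2.2 hg]

lemma lam_eval_nat (g : ℚ[X]) (M : ℕ) :
    (lam g).eval (M : ℚ) = ∑ t ∈ range (M+1), g.eval (t : ℚ) := by
  induction M with
  | zero => simpa using (lam_spec g).2.1
  | succ M ih =>
    have := lam_diff g ((M+1 : ℕ) : ℚ)
    have hc : ((M+1 : ℕ) : ℚ) - 1 = (M : ℚ) := by push_cast; ring
    rw [hc, ih] at this
    rw [Finset.sum_range_succ]
    push_cast at this ⊢
    linarith

lemma lam_eval_neg (g : ℚ[X]) (u : ℕ) :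
    (lam g).eval (-((u:ℚ)+1)) = -∑ t ∈ range u, g.eval (-((t:ℚ)+1)) := by
  induction u with
  | zero =>
    have := lam_diff g 0
    rw [(lam_spec g).2.1] at this
    simp only [zero_sub] at this
    simp
    linarith [this]
  | succ u ih =>
    have := lam_diff g (-((u:ℚ)+1))
    have hc : (-((u:ℚ)+1)) - 1 = -(((u+1:ℕ):ℚ)+1) := by push_cast; ring
    rw [hc, ih] at this
    rw [Finset.sum_range_succ]
    push_cast at this ⊢
    linarith

lemma parity_sum_reindex (f : ℕ → ℚ) (r : ℕ) (hr : r ≤ 1) (N : ℕ) :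
    ∑ i ∈ (range N).filter (fun i => i % 2 = r), f i
      = ∑ t ∈ range ((N + 1 - r) / 2), f (2*t + r) := by
  induction N with
  | zero =>
    have h0 : (0+1-r)/2 = 0 := by omega
    rw [h0]
    simp
  | succ N ih =>
    rw [Finset.range_add_one, Finset.filter_insert]
    by_cases hN : N % 2 = r
    · rw [if_pos hN, Finset.sum_insert (by simp)]
      have h2 : (N + 1 + 1 - r)/2 = (N + 1 - r)/2 + 1 := by omega
      rw [h2, Finset.sum_range_succ, ih]
      have h3 : 2 * ((N+1-r)/2) + r = N := by omega
      rw [h3]; ring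
    · rw [if_neg hN, ih]
      have h2 : (N + 1 + 1 - r)/2 = (N + 1 - r)/2 := by omega
      rw [h2]



lemma lin_eq (a b : ℚ) : C a * (X - C b) = C a * X + C (a * -b) := by
  rw [mul_sub, ← C_mul, mul_neg, C_neg, sub_eq_add_neg]

lemma lin_natDegree (a b : ℚ) (ha : a ≠ 0) : (C a * (X - C b)).natDegree = 1 := by
  rw [lin_eq]; exact natDegree_linear ha

lemma lin_leadingCoeff (a b : ℚ) (ha : a ≠ 0) : (C a * (X - C b)).leadingCoeff = a := by
  rw [lin_eq]; exact leadingCoeff_linear ha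

noncomputable def gpar (s ε : ℕ) : ℚ[X] := (C 2 * X + C (ε:ℚ))^s

lemma gpar_eval (s ε : ℕ) (x : ℚ) : (gpar s ε).eval x = (2*x + ε)^s := by
  simp [gpar]

lemma gpar_natDegree (s ε : ℕ) : (gpar s ε).natDegree = s := by
  rw [gpar, natDegree_pow, natDegree_linear (by norm_num : (2:ℚ) ≠ 0), mul_one]

lemma gpar_ne_zero (s ε : ℕ) : gpar s ε ≠ 0 := by
  apply pow_ne_zero
  intro h
  have := natDegree_linear (by norm_num : (2:ℚ) ≠ 0) (b := (ε:ℚ))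
  rw [h] at this
  simp at this

lemma gpar_leadingCoeff (s ε : ℕ) : (gpar s ε).leadingCoeff = 2^s := by
  rw [gpar, leadingCoeff_pow, leadingCoeff_linear (by norm_num : (2:ℚ) ≠ 0)]

noncomputable def w (s ε δ : ℕ) : ℚ[X] :=
  (lam (gpar s ε)).comp (C (1/2 : ℚ) * (X - C ((ε:ℚ) + δ)))

lemma w_natDegree (s ε δ : ℕ) : (w s ε δ).natDegree = s + 1 := by
  rw [w, natDegree_comp, lam_natDegree _ (gpar_ne_zero s ε), gpar_natDegree,
    lin_natDegree _ _ (by norm_num), mul_one]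

lemma w_leadingCoeff (s ε δ : ℕ) : (w s ε δ).leadingCoeff = 1 / (2*(s+1)) := by
  rw [w, leadingCoeff_comp (by rw [lin_natDegree _ _ (by norm_num : (1/2:ℚ) ≠ 0)]; norm_num)]
  rw [lam_natDegree _ (gpar_ne_zero s ε), lam_leadingCoeff _ (gpar_ne_zero s ε),
    gpar_natDegree, gpar_leadingCoeff, lin_leadingCoeff _ _ (by norm_num)]
  have h3 : (1/2:ℚ)^(s+1) = 1/(2^s*2) := by rw [div_pow, one_pow, pow_succ]
  rw [h3]
  have h4 : (s:ℚ) + 1 ≠ 0 := by positivity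
  have h5 : (2:ℚ)^s ≠ 0 := by positivity
  field_simp

lemma w_coeff_top (s ε δ : ℕ) : (w s ε δ).coeff (s+1) = 1 / (2*(s+1)) := by
  rw [← w_natDegree s ε δ, ← w_leadingCoeff s ε δ]; rfl

lemma w_eval_nat (s ε δ : ℕ) (hε : ε ≤ 1) (hδ : δ ≤ 1) (n : ℕ) (hn : n % 2 = (ε + δ) % 2) :
    (w s ε δ).eval (n:ℚ) = ∑ i ∈ (range (n+1)).filter (fun i => i % 2 = ε), (i:ℚ)^s := by
  rw [w, eval_comp]
  rw [parity_sum_reindex _ ε hε]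
  by_cases hc : ε + δ ≤ n
  · set M := (n - (ε+δ))/2 with hM
    have hM2 : n = 2*M + ε + δ := by omega
    have he : eval (↑n) (C (1/2:ℚ) * (X - C ((ε:ℚ) + δ))) = (M : ℚ) := by
      simp only [eval_mul, eval_C, eval_sub, eval_X]
      rw [hM2]; push_cast; ring
    rw [he, lam_eval_nat]
    have hcount : (n + 1 + 1 - ε)/2 = M + 1 := by omega
    rw [hcount]
    apply Finset.sum_congr rfl
    intro t _
    rw [gpar_eval]
    push_cast
    ring
  · have hn0 : n = 0 ∧ ε = 1 ∧ δ = 1 := by omega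
    obtain ⟨h1, h2, h3⟩ := hn0
    subst h1; subst h2; subst h3
    have he : eval ((0:ℕ):ℚ) (C (1/2:ℚ) * (X - C (((1:ℕ):ℚ) + ((1:ℕ):ℚ)))) = -((0:ℚ)+1) := by
      simp only [eval_mul, eval_C, eval_sub, eval_X]
      push_cast; norm_num
    rw [he]
    have := lam_eval_neg (gpar s 1) 0
    push_cast at this ⊢
    rw [this]
    norm_num

lemma w_eval_neg (s ε δ : ℕ) (hε : ε ≤ 1) (hδ : δ ≤ 1) (hs : 1 ≤ s) (n : ℕ)
    (hn : n % 2 = (ε + δ) % 2) (hn2 : 2 ≤ n) :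
    (w s ε δ).eval (-(n:ℚ)) = -(-1:ℚ)^s *
      ∑ i ∈ (range (n + δ - 1)).filter (fun i => i % 2 = ε), (i:ℚ)^s := by
  rw [w, eval_comp]
  obtain ⟨u, hu2, hu1⟩ : ∃ u, n + ε + δ = 2*u ∧ 1 ≤ u := ⟨(n+ε+δ)/2, by omega, by omega⟩
  have he : eval (-(n:ℚ)) (C (1/2:ℚ) * (X - C ((ε:ℚ) + δ))) = -(((u-1:ℕ):ℚ)+1) := by
    simp only [eval_mul, eval_C, eval_sub, eval_X]
    have : ((u-1:ℕ):ℚ) = (u:ℚ) - 1 := by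
      have : (1:ℕ) ≤ u := hu1
      push_cast [Nat.cast_sub this]; ring
    rw [this]
    have h2u : (n:ℚ) + ε + δ = 2*u := by exact_mod_cast congrArg (Nat.cast : ℕ → ℚ) hu2
    field_simp
    linarith
  rw [he, lam_eval_neg]
  rw [parity_sum_reindex _ ε hε]
  rw [neg_mul, neg_inj]
  rcases (by omega : ε = 0 ∨ ε = 1) with h|h <;> subst h
  · have hcount : (n + δ - 1 + 1 - 0)/2 = u := by omega
    rw [hcount, Finset.mul_sum]
    have hu' : u = (u-1) + 1 := by omega
    rw [hu', Finset.sum_range_succ']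
    have hz : (-1:ℚ)^s * ((2*0+0:ℕ):ℚ)^s = 0 := by
      norm_num
      omega
    rw [hz, add_zero]
    apply Finset.sum_congr rfl
    intro t _
    rw [gpar_eval]
    push_cast
    rw [show (2 * (-((t:ℚ)+1)) + 0) = -((2:ℚ)*(t+1)+0) by ring, neg_pow]
  · have hcount : (n + δ - 1 + 1 - 1)/2 = u - 1 := by omega
    rw [hcount, Finset.mul_sum]
    apply Finset.sum_congr rfl
    intro t _
    rw [gpar_eval]
    push_cast
    rw [show (2 * (-((t:ℚ)+1)) + 1) = -((2:ℚ)*t+1) by ring, neg_pow]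


lemma beta_sum : ∀ (d k : ℕ), ∑ u ∈ range (d+1), ((d.choose u : ℚ) * (-1)^u / (k+u+1))
    = (k.factorial * d.factorial : ℚ) / (k+d+1).factorial := by
  intro d
  induction d with
  | zero =>
    intro k
    rw [Finset.sum_range_one]
    have h1 : (k+0+1).factorial = (k+1) * k.factorial := by
      simp [Nat.factorial_succ]
    rw [h1]
    have h2 : (k.factorial : ℚ) ≠ 0 := by
      exact_mod_cast Nat.factorial_pos k |>.ne'
    have h3 : ((k:ℚ)+1) ≠ 0 := by positivity
    push_cast
    field_simp
    simp
  | succ d ih =>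
    intro k
    rw [Finset.sum_range_succ']
    have key : ∀ u ∈ range (d+1), (((d+1).choose (u+1) : ℚ) * (-1)^(u+1) / ((k:ℚ)+((u+1:ℕ):ℚ)+1))
        = ((d.choose (u+1) : ℚ) * (-1)^(u+1) / ((k:ℚ)+((u+1:ℕ):ℚ)+1))
          + (-((d.choose u : ℚ) * (-1)^(u) / ((((k+1):ℕ):ℚ)+(u:ℚ)+1))) := by
      intro u _
      rw [Nat.choose_succ_succ]
      push_cast
      ring
    rw [Finset.sum_congr rfl key, Finset.sum_add_distrib]
    have e2 : ∑ u ∈ range (d+1), (-((d.choose u : ℚ) * (-1)^(u) / ((((k+1):ℕ):ℚ)+(u:ℚ)+1)))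
        = -((((k+1):ℕ).factorial * d.factorial : ℚ) / ((k+1)+d+1).factorial) := by
      rw [← ih (k+1)]
      rw [← Finset.sum_neg_distrib]
    rw [e2]
    have e1 : (∑ u ∈ range (d+1), ((d.choose (u+1) : ℚ) * (-1)^(u+1) / ((k:ℚ)+((u+1:ℕ):ℚ)+1)))
          + (((d+1).choose 0 : ℚ) * (-1)^0 / ((k:ℚ)+((0:ℕ):ℚ)+1))
        = ∑ u ∈ range (d+1), ((d.choose u : ℚ) * (-1)^u / ((k:ℚ)+(u:ℚ)+1)) := by
      have h0 : (((d+1).choose 0 : ℚ) * (-1)^0 / ((k:ℚ)+((0:ℕ):ℚ)+1))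
          = ((d.choose 0 : ℚ) * (-1)^0 / ((k:ℚ)+((0:ℕ):ℚ)+1)) := by
        norm_num
      have hs' := Finset.sum_range_succ' (fun u => ((d.choose u:ℚ) * (-1)^u / ((k:ℚ)+(u:ℚ)+1))) (d+1)
      have hs'' := Finset.sum_range_succ (fun u => ((d.choose u:ℚ) * (-1)^u / ((k:ℚ)+(u:ℚ)+1))) (d+1)
      rw [h0, ← hs', hs'']
      have hd1 : (d.choose (d+1) : ℚ) = 0 := by
        rw [Nat.choose_eq_zero_of_lt (by omega)]; norm_num
      rw [hd1]
      norm_num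
    rw [add_right_comm, e1, ih k]
    have f1 : ((k+1)+d+1).factorial = (k+d+2) * (k+d+1).factorial := by
      have : (k+1)+d+1 = (k+d+1)+1 := by omega
      rw [this, Nat.factorial_succ]
    have f2 : (k+(d+1)+1).factorial = (k+d+2) * (k+d+1).factorial := by
      have : k+(d+1)+1 = (k+d+1)+1 := by omega
      rw [this, Nat.factorial_succ]
    have f3 : ((k+1):ℕ).factorial = (k+1) * k.factorial := Nat.factorial_succ k
    have f4 : (d+1).factorial = (d+1) * d.factorial := Nat.factorial_succ d
    rw [f1, f2, f3, f4]
    have h2 : (k.factorial : ℚ) ≠ 0 := by exact_mod_cast Nat.factorial_pos k |>.ne'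
    have h3 : (d.factorial : ℚ) ≠ 0 := by exact_mod_cast Nat.factorial_pos d |>.ne'
    have h4 : ((k+d+1).factorial : ℚ) ≠ 0 := by exact_mod_cast Nat.factorial_pos (k+d+1) |>.ne'
    have h5 : ((k:ℚ)+d+2) ≠ 0 := by positivity
    push_cast
    field_simp
    ring


lemma beta_sum' (d k : ℕ) : ∑ u ∈ range (d+1),
    ((d.choose u : ℚ) * (-1)^(u+d) / ((k:ℚ) + ((d - u : ℕ):ℚ) + 1))
    = (k.factorial * d.factorial : ℚ) / ((k+d+1).factorial) := by
  rw [← beta_sum d k,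
    ← Finset.sum_range_reflect (fun u => ((d.choose u : ℚ) * (-1)^u / (k+u+1))) (d+1)]
  apply Finset.sum_congr rfl
  intro u hu
  simp only [Finset.mem_range] at hu
  have h1 : d + 1 - 1 - u = d - u := by omega
  rw [h1]
  have h2 : d.choose (d - u) = d.choose u := Nat.choose_symm (by omega)
  rw [h2]
  have h3 : (-1:ℚ)^(d-u) = (-1:ℚ)^(u+d) := by
    rw [show u + d = (d - u) + 2*u by omega, pow_add, pow_mul]
    norm_num
  rw [h3]



lemma mul_sum_mul (S : Finset ℕ) (f : ℕ → ℚ) (a b : ℚ) :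
    a * (∑ i ∈ S, f i) * b = ∑ i ∈ S, a * f i * b := by
  rw [Finset.mul_sum, Finset.sum_mul]

noncomputable def convQ (p : ℚ[X]) (k ε δ : ℕ) : ℚ[X] :=
  ∑ r ∈ range (p.natDegree + 1), ∑ u ∈ range (r+1),
    C (p.coeff r * (-1)^(u+r) * (r.choose u)) * w (k + (r-u)) ε δ * X^u

lemma convQ_eval_nat (p : ℚ[X]) (k ε δ : ℕ) (hk1 : 1 ≤ k) (hε : ε ≤ 1) (hδ : δ ≤ 1)
    (n : ℕ) (hn : n % 2 = (ε + δ) % 2) :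
    (convQ p k ε δ).eval (n:ℚ)
      = ∑ i ∈ (range (n+1)).filter (fun i => i % 2 = ε), (i:ℚ)^k * p.eval ((n:ℚ) - i) := by
  rw [convQ, eval_finset_sum]
  have step1 : ∀ r ∈ range (p.natDegree + 1),
      (∑ u ∈ range (r+1),
        C (p.coeff r * (-1)^(u+r) * (r.choose u)) * w (k + (r-u)) ε δ * X^u).eval (n:ℚ)
      = ∑ i ∈ (range (n+1)).filter (fun i => i % 2 = ε),
          ∑ u ∈ range (r+1),
            p.coeff r * (-1)^(u+r) * (r.choose u) * (i:ℚ)^(k+(r-u)) * (n:ℚ)^u := by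
    intro r _
    rw [eval_finset_sum, Finset.sum_comm]
    apply Finset.sum_congr rfl
    intro u _
    rw [eval_mul, eval_mul, eval_C, eval_pow, eval_X, w_eval_nat _ _ _ hε hδ n hn,
      mul_sum_mul]
  rw [Finset.sum_congr rfl step1, Finset.sum_comm]
  apply Finset.sum_congr rfl
  intro i _
  rw [eval_eq_sum_range, Finset.mul_sum]
  apply Finset.sum_congr rfl
  intro r _
  rw [sub_pow, Finset.mul_sum, Finset.mul_sum]
  apply Finset.sum_congr rfl
  intro u _
  rw [pow_add]
  push_cast
  ring

lemma convQ_eval_neg (p : ℚ[X]) (hodd : ∀ x : ℚ, p.eval (-x) = - p.eval x)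
    (k ε δ : ℕ) (hk1 : 1 ≤ k) (hkodd : k % 2 = 1) (hε : ε ≤ 1) (hδ : δ ≤ 1)
    (n : ℕ) (hn : n % 2 = (ε + δ) % 2) (hn2 : 2 ≤ n) :
    (convQ p k ε δ).eval (-(n:ℚ)) = - (convQ p k ε δ).eval (n:ℚ) := by
  have hp0 : p.eval 0 = 0 := by
    have := hodd 0
    rw [neg_zero] at this
    linarith
  have hk : (-1:ℚ)^k = -1 := Odd.neg_one_pow (Nat.odd_iff.mpr hkodd)
  rw [convQ_eval_nat p k ε δ hk1 hε hδ n hn]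
  have hsub : ∑ i ∈ (range (n + δ - 1)).filter (fun i => i % 2 = ε),
        (i:ℚ)^k * p.eval ((n:ℚ) - i)
      = ∑ i ∈ (range (n+1)).filter (fun i => i % 2 = ε), (i:ℚ)^k * p.eval ((n:ℚ) - i) := by
    apply Finset.sum_subset
    · apply Finset.filter_subset_filter
      apply Finset.range_subset_range.mpr
      omega
    · intro i hi hni
      simp only [Finset.mem_filter, Finset.mem_range] at hi hni
      have hin : i = n := by omega
      subst hin
      rw [sub_self, hp0, mul_zero]
  rw [← hsub]
  rw [convQ, eval_finset_sum, ← Finset.sum_neg_distrib]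
  have step1 : ∀ r ∈ range (p.natDegree + 1),
      (∑ u ∈ range (r+1),
        C (p.coeff r * (-1)^(u+r) * (r.choose u)) * w (k + (r-u)) ε δ * X^u).eval (-(n:ℚ))
      = ∑ i ∈ (range (n + δ - 1)).filter (fun i => i % 2 = ε),
          ∑ u ∈ range (r+1),
            p.coeff r * (-1)^u * (r.choose u) * (i:ℚ)^(k+(r-u)) * (n:ℚ)^u := by
    intro r _
    rw [eval_finset_sum, Finset.sum_comm]
    apply Finset.sum_congr rfl
    intro u hu
    have hur : u ≤ r := by
      simp only [Finset.mem_range] at hu; omega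
    rw [eval_mul, eval_mul, eval_C, eval_pow, eval_X,
      w_eval_neg _ _ _ hε hδ (by omega) n hn hn2, neg_mul, Finset.mul_sum, mul_neg, neg_mul,
      mul_sum_mul, ← Finset.sum_neg_distrib]
    apply Finset.sum_congr rfl
    intro i _
    have hsign : (-1:ℚ)^(u+r) * (-1:ℚ)^(k+(r-u)) * (-1:ℚ)^u = -(-1:ℚ)^u := by
      rw [← pow_add, ← pow_add, show (u+r)+(k+(r-u))+u = 2*r + (k + u) by omega,
        pow_add, pow_mul, pow_add, hk]
      ring
    rw [neg_pow (n:ℚ) u]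
    linear_combination (-(p.coeff r * (r.choose u : ℚ) * (i:ℚ)^(k+(r-u)) * (n:ℚ)^u)) * hsign
  rw [Finset.sum_congr rfl step1, Finset.sum_comm]
  apply Finset.sum_congr rfl
  intro i _
  have hrhs : -((i:ℚ)^k * p.eval ((n:ℚ) - i)) = (i:ℚ)^k * p.eval ((i:ℚ) - n) := by
    rw [show ((i:ℚ) - n) = -((n:ℚ) - i) by ring, hodd]
    ring
  rw [hrhs, eval_eq_sum_range, Finset.mul_sum]
  apply Finset.sum_congr rfl
  intro r _
  rw [show ((i:ℚ) - n) = -((n:ℚ) - i) by ring, neg_pow ((n:ℚ) - i) r, sub_pow,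
    Finset.mul_sum, Finset.mul_sum, Finset.mul_sum]
  apply Finset.sum_congr rfl
  intro u _
  have hsign2 : (-1:ℚ)^r * (-1:ℚ)^(u+r) = (-1:ℚ)^u := by
    rw [← pow_add, show r+(u+r) = 2*r + u by omega, pow_add, pow_mul]
    ring
  rw [pow_add]
  push_cast
  linear_combination (-((i:ℚ)^k * p.coeff r * (n:ℚ)^u * (i:ℚ)^(r-u) * (r.choose u : ℚ))) * hsign2

lemma convQ_natDegree_le (p : ℚ[X]) (k ε δ : ℕ) :
    (convQ p k ε δ).natDegree ≤ p.natDegree + k + 1 := by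
  apply Polynomial.natDegree_sum_le_of_forall_le
  intro r hr
  apply Polynomial.natDegree_sum_le_of_forall_le
  intro u hu
  simp only [Finset.mem_range] at hr hu
  refine (natDegree_mul_le).trans ?_
  refine le_trans (add_le_add (natDegree_mul_le) le_rfl) ?_
  rw [natDegree_C, natDegree_X_pow, w_natDegree, zero_add]
  omega

lemma convQ_coeff_top (p : ℚ[X]) (k ε δ : ℕ) :
    (convQ p k ε δ).coeff (p.natDegree + k + 1)
      = p.leadingCoeff * ((k.factorial * p.natDegree.factorial : ℚ)
          / (2 * (k + p.natDegree + 1).factorial)) := by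
  set d := p.natDegree with hd
  have hcoeff : ∀ r, r < d + 1 → ∀ u, u < r + 1 →
      (C (p.coeff r * (-1)^(u+r) * (r.choose u)) * w (k + (r-u)) ε δ * X^u).coeff (d+k+1)
      = if r = d then (p.coeff r * (-1)^(u+r) * (r.choose u)) * (1 / (2*(((k+(d-u):ℕ)):ℚ)+2)) else 0 := by
    intro r hr u hu
    rw [coeff_mul_X_pow']
    rw [if_pos (by omega : u ≤ d+k+1)]
    rw [coeff_C_mul]
    by_cases hrd : r = d
    · subst hrd
      have he : d+k+1-u = (k+(d-u)) + 1 := by omega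
      rw [he, w_coeff_top, if_pos rfl]
      push_cast
      ring_nf
    · rw [if_neg hrd]
      have : (w (k + (r-u)) ε δ).coeff (d+k+1-u) = 0 := by
        apply coeff_eq_zero_of_natDegree_lt
        rw [w_natDegree]
        omega
      rw [this, mul_zero]
  rw [convQ, finset_sum_coeff]
  have step : ∀ r ∈ range (d+1),
      (∑ u ∈ range (r+1),
        C (p.coeff r * (-1)^(u+r) * (r.choose u)) * w (k + (r-u)) ε δ * X^u).coeff (d+k+1)
      = if r = d then
          ∑ u ∈ range (r+1), (p.coeff r * (-1)^(u+r) * (r.choose u)) * (1 / (2*(((k+(d-u):ℕ)):ℚ)+2))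
        else 0 := by
    intro r hr
    simp only [Finset.mem_range] at hr
    rw [finset_sum_coeff]
    by_cases hrd : r = d
    · rw [if_pos hrd]
      apply Finset.sum_congr rfl
      intro u hu
      simp only [Finset.mem_range] at hu
      rw [hcoeff r hr u hu, if_pos hrd]
    · rw [if_neg hrd]
      apply Finset.sum_eq_zero
      intro u hu
      simp only [Finset.mem_range] at hu
      rw [hcoeff r hr u hu, if_neg hrd]
  rw [Finset.sum_congr rfl step, Finset.sum_ite_eq' (range (d+1)) d, if_pos (by simp)]
  have final : ∑ u ∈ range (d+1), (p.coeff d * (-1)^(u+d) * (d.choose u : ℚ)) * (1 / (2*(((k+(d-u):ℕ)):ℚ)+2))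
      = p.coeff d / 2 * ∑ u ∈ range (d+1), ((d.choose u : ℚ) * (-1)^(u+d) / ((k:ℚ) + ((d - u : ℕ):ℚ) + 1)) := by
    rw [Finset.mul_sum]
    apply Finset.sum_congr rfl
    intro u hu
    have hne : ((k:ℚ) + ((d-u:ℕ):ℚ) + 1) ≠ 0 := by positivity
    push_cast at hne ⊢
    field_simp
  rw [final, beta_sum', leadingCoeff, ← hd]
  have h4 : ((k+d+1).factorial : ℚ) ≠ 0 := by exact_mod_cast (Nat.factorial_pos _).ne'
  field_simp



lemma conv_main (p : ℚ[X]) (hodd : ∀ x : ℚ, p.eval (-x) = - p.eval x) (hlc : 0 < p.leadingCoeff)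
    (k ε δ : ℕ) (hk1 : 1 ≤ k) (hkodd : k % 2 = 1) (hε : ε ≤ 1) (hδ : δ ≤ 1) :
    ∃ q : ℚ[X], (∀ x : ℚ, q.eval (-x) = - q.eval x) ∧
      q.degree = ((p.natDegree + k + 1 : ℕ) : WithBot ℕ) ∧
      q.leadingCoeff = p.leadingCoeff * ((k.factorial * p.natDegree.factorial : ℚ)
        / (2 * (k + p.natDegree + 1).factorial)) ∧
      ∀ n : ℕ, n % 2 = (ε + δ) % 2 →
        q.eval (n:ℚ) = ∑ i ∈ (range (n+1)).filter (fun i => i % 2 = ε),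
          (i:ℚ)^k * p.eval ((n:ℚ) - i) := by
  have hf1 : (0:ℚ) < k.factorial := by exact_mod_cast Nat.factorial_pos k
  have hf2 : (0:ℚ) < p.natDegree.factorial := by exact_mod_cast Nat.factorial_pos _
  have hf3 : (0:ℚ) < (k + p.natDegree + 1).factorial := by exact_mod_cast Nat.factorial_pos _
  have hfac : (0:ℚ) < (k.factorial * p.natDegree.factorial : ℚ)
      / (2 * (k + p.natDegree + 1).factorial) := by positivity
  have hco : (convQ p k ε δ).coeff (p.natDegree + k + 1) ≠ 0 := by
    rw [convQ_coeff_top]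
    exact ne_of_gt (mul_pos hlc hfac)
  have hndeg : (convQ p k ε δ).natDegree = p.natDegree + k + 1 :=
    le_antisymm (convQ_natDegree_le p k ε δ) (le_natDegree_of_ne_zero hco)
  have hq0 : convQ p k ε δ ≠ 0 := fun h => hco (by rw [h]; simp)
  have hroots : (convQ p k ε δ).comp (-X) + convQ p k ε δ = 0 := by
    apply Polynomial.eq_zero_of_infinite_isRoot
    apply Set.Infinite.mono ?_
      (Set.infinite_range_of_injective (f := fun m : ℕ => ((2*m + 2 + (ε+δ) % 2 : ℕ) : ℚ)) ?_)
    · rintro x ⟨mm, rfl⟩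
      simp only [Set.mem_setOf_eq, IsRoot, eval_add, eval_comp, eval_neg, eval_X]
      have hpar : (2*mm + 2 + (ε+δ) % 2) % 2 = (ε + δ) % 2 := by omega
      have := convQ_eval_neg p hodd k ε δ hk1 hkodd hε hδ (2*mm + 2 + (ε+δ) % 2) hpar (by omega)
      rw [this]
      ring
    · intro a b hab
      simp only at hab
      have : (2*a + 2 + (ε+δ) % 2) = (2*b + 2 + (ε+δ) % 2) := by exact_mod_cast hab
      omega
  refine ⟨convQ p k ε δ, ?_, ?_, ?_, ?_⟩
  · intro x
    have := congrArg (eval x) hroots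
    simp only [eval_add, eval_comp, eval_neg, eval_X, eval_zero] at this
    linarith
  · rw [degree_eq_natDegree hq0, hndeg]
  · rw [leadingCoeff, hndeg, convQ_coeff_top]
  · intro n hn
    exact convQ_eval_nat p k ε δ hk1 hε hδ n hn


lemma decomp (m : ℕ) (κ ε : Fin (m+1) → ℕ) (n : ℕ) :
    ∑ i ∈ (Fintype.piFinset fun _ : Fin (m+1) => Finset.Icc 1 n).filter
        (fun i => (∑ j, i j) = n ∧ ∀ j, i j % 2 = ε j),
      ∏ j, (i j : ℚ) ^ (κ j)
    = ∑ v ∈ (range (n+1)).filter (fun v => 1 ≤ v ∧ v % 2 = ε (Fin.last m)),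
        ((v:ℚ)^(κ (Fin.last m)) *
        ∑ t ∈ (Fintype.piFinset fun _ : Fin m => Finset.Icc 1 (n - v)).filter
            (fun t => (∑ j, t j) = n - v ∧ ∀ j, t j % 2 = ε (Fin.castSucc j)),
          ∏ j, (t j : ℚ) ^ (κ (Fin.castSucc j))) := by
  have hrw : ∀ v ∈ (range (n+1)).filter (fun v => 1 ≤ v ∧ v % 2 = ε (Fin.last m)),
      ((v:ℚ)^(κ (Fin.last m)) *
        ∑ t ∈ (Fintype.piFinset fun _ : Fin m => Finset.Icc 1 (n - v)).filter
            (fun t => (∑ j, t j) = n - v ∧ ∀ j, t j % 2 = ε (Fin.castSucc j)),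
          ∏ j, (t j : ℚ) ^ (κ (Fin.castSucc j)))
      = ∑ t ∈ (Fintype.piFinset fun _ : Fin m => Finset.Icc 1 (n - v)).filter
            (fun t => (∑ j, t j) = n - v ∧ ∀ j, t j % 2 = ε (Fin.castSucc j)),
          ((v:ℚ)^(κ (Fin.last m)) * ∏ j, (t j : ℚ) ^ (κ (Fin.castSucc j))) := by
    intro v _
    rw [Finset.mul_sum]
  rw [Finset.sum_congr rfl hrw, ← Finset.sum_sigma
    ((range (n+1)).filter (fun v => 1 ≤ v ∧ v % 2 = ε (Fin.last m)))
    (fun v => (Fintype.piFinset fun _ : Fin m => Finset.Icc 1 (n - v)).filter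
            (fun t => (∑ j, t j) = n - v ∧ ∀ j, t j % 2 = ε (Fin.castSucc j)))
    (fun x => (x.1:ℚ)^(κ (Fin.last m)) * ∏ j, (x.2 j : ℚ)^(κ (Fin.castSucc j)))]
  apply Finset.sum_nbij' (fun i => (⟨i (Fin.last m), Fin.init i⟩ :
      Σ _ : ℕ, (Fin m → ℕ))) (fun a => Fin.snoc a.2 a.1)
  · -- forward membership
    intro a ha
    simp only [Finset.mem_filter, Fintype.mem_piFinset, Finset.mem_Icc, Finset.mem_range,
      Finset.mem_sigma] at ha ⊢
    obtain ⟨hbox, hsum, hpar⟩ := ha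
    have hlast := hbox (Fin.last m)
    have hsum' : (∑ j : Fin m, a (Fin.castSucc j)) + a (Fin.last m) = n := by
      rw [← Fin.sum_univ_castSucc]; exact hsum
    refine ⟨⟨by omega, hlast.1, hpar _⟩, ?_, ?_, ?_⟩
    · intro j
      have h1 := (hbox (Fin.castSucc j)).1
      have h2 : a (Fin.castSucc j) ≤ ∑ j : Fin m, a (Fin.castSucc j) :=
        Finset.single_le_sum (f := fun j : Fin m => a (Fin.castSucc j)) (fun _ _ => Nat.zero_le _) (Finset.mem_univ j)
      constructor
      · exact h1
      · simp only [Fin.init]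
        omega
    · simp only [Fin.init]
      omega
    · intro j
      simp only [Fin.init]
      exact hpar _
  · -- backward membership
    rintro ⟨v, t⟩ ha
    simp only [Finset.mem_filter, Fintype.mem_piFinset, Finset.mem_Icc, Finset.mem_range,
      Finset.mem_sigma] at ha ⊢
    obtain ⟨⟨hv1, hv2, hv3⟩, hbox, hsum, hpar⟩ := ha
    refine ⟨?_, ?_, ?_⟩
    · intro j
      refine Fin.lastCases ?_ ?_ j
      · rw [Fin.snoc_last]; omega
      · intro j'
        rw [Fin.snoc_castSucc]
        have := hbox j'
        omega
    · rw [Fin.sum_univ_castSucc]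
      simp only [Fin.snoc_castSucc, Fin.snoc_last]
      omega
    · intro j
      refine Fin.lastCases ?_ ?_ j
      · rw [Fin.snoc_last]; exact hv3
      · intro j'
        rw [Fin.snoc_castSucc]
        exact hpar j'
  · intro a _
    exact Fin.snoc_init_self a
  · rintro ⟨v, t⟩ _
    simp only [Fin.snoc_last, Fin.init_snoc]
  · intro a _
    rw [Fin.prod_univ_castSucc]
    simp only [Fin.init]
    ring




lemma main_ind : ∀ (m : ℕ) (k : Fin (m+1) → ℕ), (∀ j, 0 < k j) → (∀ j, k j % 2 = 1) →
    ∃ c : ℚ, 0 < c ∧ ∀ ε : Fin (m+1) → ℕ, (∀ j, ε j ≤ 1) → ∃ p : ℚ[X],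
      (∀ x : ℚ, p.eval (-x) = -p.eval x) ∧
      p.degree = (((∑ j, k j) + (m+1) - 1 : ℕ) : WithBot ℕ) ∧
      p.leadingCoeff = c ∧
      ∀ n : ℕ, 1 ≤ n → n % 2 = (∑ j, ε j) % 2 →
        (∑ i ∈ (Fintype.piFinset fun _ : Fin (m+1) => Finset.Icc 1 n).filter
            (fun i => (∑ j, i j) = n ∧ ∀ j, i j % 2 = ε j),
          ∏ j, (i j : ℚ) ^ (k j)) = p.eval (n:ℚ) := by
  intro m
  induction m with
  | zero =>
    intro k hkpos hkodd
    refine ⟨1, one_pos, ?_⟩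
    intro ε hε
    refine ⟨X ^ (k 0), ?_, ?_, ?_, ?_⟩
    · intro x
      simp only [eval_pow, eval_X]
      exact Odd.neg_pow (Nat.odd_iff.mpr (hkodd 0)) x
    · have hnat : (∑ j, k j) + (0+1) - 1 = k 0 := by simp
      rw [hnat, degree_X_pow]
    · exact (monic_X_pow (k 0)).leadingCoeff
    · intro n hn1 hnpar
      rw [Fin.sum_univ_one] at hnpar
      have hset : (Fintype.piFinset fun _ : Fin 1 => Finset.Icc 1 n).filter
          (fun i => (∑ j, i j) = n ∧ ∀ j, i j % 2 = ε j) = {fun _ => n} := by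
        ext i
        simp only [Finset.mem_filter, Fintype.mem_piFinset, Finset.mem_Icc,
          Finset.mem_singleton, Fin.sum_univ_one]
        constructor
        · rintro ⟨hbox, hsum, hpar⟩
          funext j
          have hj0 : j = 0 := Fin.ext (by have := j.isLt; omega)
          rw [hj0]
          exact hsum
        · rintro rfl
          refine ⟨fun _ => ⟨hn1, le_rfl⟩, rfl, fun j => ?_⟩
          have hj0 : j = 0 := Fin.ext (by have := j.isLt; omega)
          rw [hj0]
          show n % 2 = ε 0
          have : ε 0 ≤ 1 := hε 0
          omega
      rw [hset, Finset.sum_singleton, Fin.prod_univ_one]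
      simp
  | succ m IH =>
    intro k hkpos hkodd
    obtain ⟨c', hc'pos, H⟩ := IH (fun j => k (Fin.castSucc j))
      (fun j => hkpos _) (fun j => hkodd _)
    set kl := k (Fin.last (m+1)) with hkl
    set dd := (∑ j : Fin (m+1), k (Fin.castSucc j)) + (m+1) - 1 with hdd
    refine ⟨c' * ((kl.factorial * dd.factorial : ℚ) / (2 * (kl + dd + 1).factorial)), ?_, ?_⟩
    · have hf1 : (0:ℚ) < kl.factorial := by exact_mod_cast Nat.factorial_pos _
      have hf2 : (0:ℚ) < dd.factorial := by exact_mod_cast Nat.factorial_pos _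
      have hf3 : (0:ℚ) < (kl + dd + 1).factorial := by exact_mod_cast Nat.factorial_pos _
      positivity
    intro ε hε
    obtain ⟨p, hodd, hdeg, hlead, hsum⟩ := H (fun j => ε (Fin.castSucc j)) (fun j => hε _)
    have hpnat : p.natDegree = dd := natDegree_eq_of_degree_eq_some hdeg
    have hp0 : p.eval 0 = 0 := by
      have := hodd 0; rw [neg_zero] at this; linarith
    obtain ⟨q, hqodd, hqdeg, hqlead, hqsum⟩ := conv_main p hodd
      (by rw [hlead]; exact hc'pos) kl (ε (Fin.last (m+1)))
      ((∑ j : Fin (m+1), ε (Fin.castSucc j)) % 2)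
      (hkpos _) (hkodd _) (hε _) (by omega)
    refine ⟨q, hqodd, ?_, ?_, ?_⟩
    · rw [hqdeg]
      congr 1
      rw [hpnat, Fin.sum_univ_castSucc (f := k)]
      have h1 : 1 ≤ m + 1 := by omega
      omega
    · rw [hqlead, hlead, hpnat]
    · intro n hn1 hnpar
      have hεl : ε (Fin.last (m+1)) ≤ 1 := hε _
      have hnpar' : n % 2 = ((∑ j : Fin (m+1), ε (Fin.castSucc j)) + ε (Fin.last (m+1))) % 2 := by
        rw [← Fin.sum_univ_castSucc (f := ε)]
        exact hnpar
      have hparconv : n % 2 = (ε (Fin.last (m+1))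
          + (∑ j : Fin (m+1), ε (Fin.castSucc j)) % 2) % 2 := by
        omega
      rw [hqsum n hparconv, decomp (m+1) k ε n]
      rw [← Finset.sum_subset (s₁ := (range (n+1)).filter
          (fun v => 1 ≤ v ∧ v % 2 = ε (Fin.last (m+1))))
          (s₂ := (range (n+1)).filter (fun v => v % 2 = ε (Fin.last (m+1))))
          ?_ ?_]
      · apply Finset.sum_congr rfl
        intro v hv
        simp only [Finset.mem_filter, Finset.mem_range] at hv
        obtain ⟨hvr, hv1, hv2⟩ := hv
        by_cases hvn : v = n
        · subst hvn
          have hempty : (Fintype.piFinset fun _ : Fin (m+1) => Finset.Icc 1 (v - v)).filter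
              (fun t => (∑ j, t j) = v - v ∧ ∀ j, t j % 2 = ε (Fin.castSucc j)) = ∅ := by
            apply Finset.eq_empty_of_forall_notMem
            intro t ht
            simp only [Finset.mem_filter, Fintype.mem_piFinset, Finset.mem_Icc] at ht
            have := ht.1 0
            omega
          rw [hempty, Finset.sum_empty, mul_zero, sub_self, hp0, mul_zero]
        · have hvlt : v < n := by omega
          have hinner := hsum (n - v) (by omega) (by omega)
          rw [hinner]
          have : ((n - v : ℕ) : ℚ) = (n:ℚ) - v := by
            push_cast [Nat.cast_sub (by omega : v ≤ n)]
            ring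
          rw [this]
      · intro x hx
        simp only [Finset.mem_filter, Finset.mem_range] at hx ⊢
        exact ⟨hx.1, hx.2.2⟩
      · intro x hx hnx
        simp only [Finset.mem_filter, Finset.mem_range] at hx hnx
        have hx0 : x = 0 := by
          by_contra hh
          exact hnx ⟨hx.1, by omega, hx.2⟩
        subst hx0
        rw [Nat.cast_zero, zero_pow (by have := hkpos (Fin.last (m+1)); omega), zero_mul]

/-- Let `m ≥ 1` and `k₁, …, k_m` be odd positive integers; set `D = k₁ + ⋯ + k_m + m − 1`.
Then there exists a positive rational `c` such that for every choice of parities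
`ε₁, …, ε_m ∈ {0, 1}` there exists a polynomial `p` with rational coefficients which is odd
(`p(−x) = −p(x)`), has degree exactly `D`, has leading coefficient `c`, and such that for
every integer `n ≥ 1` with `n ≡ ε₁ + ⋯ + ε_m (mod 2)`, the sum `∑ i₁^{k₁} ⋯ i_m^{k_m}`
over all `m`-tuples of integers `i₁, …, i_m ≥ 1` with `i₁ + ⋯ + i_m = n` and
`i_j ≡ ε_j (mod 2)` for each `j`, equals `p(n)`. -/
theorem stmt_9 (m : ℕ) (hm : 1 ≤ m) (k : Fin m → ℕ)
    (hkpos : ∀ j, 0 < k j) (hkodd : ∀ j, Odd (k j)) :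
    ∃ c : ℚ, 0 < c ∧
      ∀ ε : Fin m → ℕ, (∀ j, ε j ≤ 1) →
        ∃ p : Polynomial ℚ,
          (∀ x : ℚ, p.eval (-x) = - p.eval x) ∧
          p.degree = ((∑ j, k j) + m - 1 : ℕ) ∧
          p.leadingCoeff = c ∧
          ∀ n : ℕ, 1 ≤ n → n % 2 = (∑ j, ε j) % 2 →
            (∑ i ∈ (Fintype.piFinset fun _ : Fin m => Finset.Icc 1 n).filter
                (fun i => (∑ j, i j) = n ∧ ∀ j, i j % 2 = ε j),
              ∏ j, (i j : ℚ) ^ (k j))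
              = p.eval (n : ℚ) := by
  obtain ⟨m', rfl⟩ : ∃ m', m = m' + 1 := ⟨m - 1, by omega⟩
  exact main_ind m' k hkpos (fun j => Nat.odd_iff.mp (hkodd j))

end Anon9
end

section
/- For every integer k ≥ 1 and every odd natural number n, the following identity of rational numbers holds: 2·(k + 1) · ∑_{1 ≤ i ≤ n, i odd} i^k = 2·(k + 1)·n^k + ∑_{i=0}^{k} 2^i · C(k + 1, i) · B_i · (n^{k + 1 − i} − 1). -/
open Finset

lemma aux1 (k : ℕ) (x : ℚ) :
    ∑ i ∈ Finset.range (k+2), (2:ℚ)^i * (Nat.choose (k+1) i : ℚ) * bernoulli i * x^(k+1-i)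
      = 2^(k+1) * (Polynomial.bernoulli (k+1)).eval (x/2) := by
  rw [Polynomial.bernoulli, Polynomial.eval_finset_sum, Finset.mul_sum]
  refine Finset.sum_congr rfl fun i hi => ?_
  rw [Polynomial.eval_monomial]
  have hi' : i ≤ k + 1 := by simpa [Nat.lt_succ_iff] using Finset.mem_range.mp hi
  have h2 : (2:ℚ)^(k+1) = 2^i * 2^(k+1-i) := by rw [← pow_add]; congr 1; omega
  rw [h2, div_pow]
  have : (2:ℚ)^(k+1-i) ≠ 0 := by positivity
  field_simp

lemma aux2 (k : ℕ) (x : ℚ) :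
    (∑ i ∈ Finset.range (k+2), (2:ℚ)^i * (Nat.choose (k+1) i : ℚ) * bernoulli i * (x+2)^(k+1-i))
      - ∑ i ∈ Finset.range (k+2), (2:ℚ)^i * (Nat.choose (k+1) i : ℚ) * bernoulli i * x^(k+1-i)
      = 2 * ((k:ℚ)+1) * x^k := by
  rw [aux1, aux1]
  have h : (x+2)/2 = 1 + x/2 := by ring
  rw [h, Polynomial.bernoulli_eval_one_add]
  have : ((k:ℚ)+1) = ((k+1 : ℕ) : ℚ) := by push_cast; ring
  rw [div_pow]
  have h2 : (2:ℚ)^(k+1) = 2 * 2^k := by ring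
  push_cast
  field_simp
  ring

/-- For every integer `k ≥ 1` and every odd natural number `n`, the identity of rationals
`2·(k + 1) · ∑_{1 ≤ i ≤ n, i odd} i^k
  = 2·(k + 1)·n^k + ∑_{i=0}^{k} 2^i · C(k + 1, i) · B_i · (n^{k + 1 − i} − 1)`
holds, where `B_i` is the `i`-th Bernoulli number with the convention `B₁ = −1/2`. -/
theorem stmt_13 (k : ℕ) (hk : 1 ≤ k) (n : ℕ) (hn : Odd n) :
    2 * ((k : ℚ) + 1) * (∑ i ∈ (Finset.Icc 1 n).filter (fun i => Odd i), (i : ℚ) ^ k)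
      = 2 * ((k : ℚ) + 1) * (n : ℚ) ^ k +
        ∑ i ∈ Finset.range (k + 1),
          2 ^ i * (Nat.choose (k + 1) i : ℚ) * bernoulli i * ((n : ℚ) ^ (k + 1 - i) - 1) := by
  -- extend the sum to range (k+2): the extra term is zero
  have hext : ∀ m : ℚ,
      ∑ i ∈ Finset.range (k + 1),
          2 ^ i * (Nat.choose (k + 1) i : ℚ) * bernoulli i * (m ^ (k + 1 - i) - 1)
      = ∑ i ∈ Finset.range (k + 2),
          2 ^ i * (Nat.choose (k + 1) i : ℚ) * bernoulli i * (m ^ (k + 1 - i) - 1) := by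
    intro m
    rw [Finset.sum_range_succ (n := k+1)]
    simp
  obtain ⟨t, rfl⟩ := hn
  induction t with
  | zero =>
    norm_num [Finset.Icc_self, Finset.filter_singleton]
  | succ t ih =>
    have hset : (Finset.Icc 1 (2*(t+1)+1)).filter (fun i => Odd i)
        = insert (2*(t+1)+1) ((Finset.Icc 1 (2*t+1)).filter (fun i => Odd i)) := by
      ext x
      simp only [Finset.mem_filter, Finset.mem_Icc, Finset.mem_insert, Nat.odd_iff]
      omega
    have hnot : (2*(t+1)+1) ∉ (Finset.Icc 1 (2*t+1)).filter (fun i => Odd i) := by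
      simp only [Finset.mem_filter, Finset.mem_Icc]
      omega
    rw [hset, Finset.sum_insert hnot, hext]
    rw [hext] at ih
    have key := aux2 k ((2*t+1 : ℕ) : ℚ)
    have hc : ((2*(t+1)+1 : ℕ) : ℚ) = ((2*t+1 : ℕ) : ℚ) + 2 := by push_cast; ring
    rw [hc]
    rw [mul_add]
    rw [ih]
    have hsplit : ∀ m : ℚ, ∑ i ∈ Finset.range (k+2),
          (2:ℚ)^i * (Nat.choose (k+1) i : ℚ) * bernoulli i * (m^(k+1-i) - 1)
        = (∑ i ∈ Finset.range (k+2), (2:ℚ)^i * (Nat.choose (k+1) i : ℚ) * bernoulli i * m^(k+1-i))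
          - ∑ i ∈ Finset.range (k+2), (2:ℚ)^i * (Nat.choose (k+1) i : ℚ) * bernoulli i := by
      intro m
      rw [← Finset.sum_sub_distrib]
      exact Finset.sum_congr rfl fun i _ => by ring
    linarith [key, hsplit ((2*t+1 : ℕ) : ℚ), hsplit (((2*t+1 : ℕ) : ℚ) + 2)]
end

section
/- For all natural numbers k₁ and k₂, the following identity of rational numbers holds: ∑_{j=0}^{k₂} (−1)^{k₂ − j} · C(k₂, j) / (k₁ + k₂ + 1 − j) = 1 / ((k₂ + 1) · C(k₁ + k₂ + 1, k₂ + 1)). -/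
/-!
The sum is the `k₂`-th forward difference of `t ↦ t⁻¹` with step `-1` at `k₁ + k₂ + 1`.
Since `Δ_h` sends `n! / ∏_{i ≤ n} (y + i h)` to `-h (n + 1)! / ∏_{i ≤ n + 1} (y + i h)`,
the `n`-th difference of `t⁻¹` is `(-h)ⁿ n! / ∏_{i ≤ n} (y + i h)`; for `h = -1` the product
is a descending factorial, i.e. `(k₂ + 1)! C(k₁ + k₂ + 1, k₂ + 1)`.
-/

open Finset Nat fwdDiff

theorem fwdDiff_iter_inv {K : Type*} [Field K] (h y : K) (n : ℕ)
    (hy : ∀ i ≤ n, y + i * h ≠ 0) :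
    (Δ_[h])^[n] (fun t ↦ t⁻¹) y = (-h) ^ n * n ! / ∏ i ∈ range (n + 1), (y + i * h) := by
  induction n generalizing y with
  | zero => simp
  | succ n ih =>
    have hy_shift : ∀ i ≤ n, y + h + i * h ≠ 0 := fun i hi => by
      convert hy (i + 1) (by omega) using 1; push_cast; ring
    have hprod : ∏ i ∈ range (n + 1), (y + i * h) ≠ 0 :=
      prod_ne_zero_iff.2 fun i hi => hy i (by simp at hi; omega)
    have hprod_shift : ∏ i ∈ range (n + 1), (y + h + i * h) ≠ 0 :=
      prod_ne_zero_iff.2 fun i hi => hy_shift i (by simp at hi; omega)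
    have hlast : y + (n + 1 : ℕ) * h ≠ 0 := hy (n + 1) le_rfl
    -- both sides are `∏ i ∈ range (n + 2), (y + i * h)`
    have hprod_succ : (∏ i ∈ range (n + 1), (y + i * h)) * (y + (n + 1 : ℕ) * h)
        = (∏ i ∈ range (n + 1), (y + h + i * h)) * y := by
      rw [← prod_range_succ, prod_range_succ']
      congr 1
      · refine prod_congr rfl fun i _ => ?_; push_cast; ring
      · simp
    rw [Function.iterate_succ_apply', fwdDiff, ih y fun i hi => hy i (by omega),
      ih (y + h) hy_shift, prod_range_succ _ (n + 1), factorial_succ]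
    generalize ∏ i ∈ range (n + 1), (y + i * h) = A at hprod hprod_succ ⊢
    generalize ∏ i ∈ range (n + 1), (y + h + i * h) = B at hprod_shift hprod_succ ⊢
    rw [div_sub_div _ _ hprod_shift hprod, div_eq_div_iff (mul_ne_zero hprod_shift hprod)
      (mul_ne_zero hprod hlast)]
    push_cast at hprod_succ ⊢
    linear_combination ((-h) ^ n * n ! * A) * hprod_succ

/-- For all natural numbers `k₁` and `k₂`,
`∑_{j=0}^{k₂} (−1)^{k₂ − j} · C(k₂, j) / (k₁ + k₂ + 1 − j)
  = 1 / ((k₂ + 1) · C(k₁ + k₂ + 1, k₂ + 1))` as rational numbers. -/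
theorem stmt_16 (k₁ k₂ : ℕ) :
    ∑ j ∈ Finset.range (k₂ + 1),
        (-1 : ℚ) ^ (k₂ - j) * (Nat.choose k₂ j : ℚ) / ((k₁ : ℚ) + (k₂ : ℚ) + 1 - (j : ℚ))
      = 1 / (((k₂ : ℚ) + 1) * (Nat.choose (k₁ + k₂ + 1) (k₂ + 1) : ℚ)) := by
  have hne : ∀ i ≤ k₂, ((k₁ + k₂ + 1 : ℕ) : ℚ) + i * (-1) ≠ 0 := fun i hi => by
    have : (i : ℚ) < k₁ + k₂ + 1 := by exact_mod_cast (by omega : i < k₁ + k₂ + 1)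
    push_cast
    linarith
  have hchoose : ((k₁ + k₂ + 1).choose (k₂ + 1) : ℚ) ≠ 0 := by
    exact_mod_cast (Nat.choose_pos (by omega)).ne'
  calc _ = ∑ j ∈ range (k₂ + 1), ((-1 : ℤ) ^ (k₂ - j) * k₂.choose j) •
          (((k₁ + k₂ + 1 : ℕ) : ℚ) + j • (-1))⁻¹ :=
        sum_congr rfl fun j _ => by rw [zsmul_eq_mul, nsmul_eq_mul]; push_cast; ring
    _ = (Δ_[-1])^[k₂] (fun t : ℚ ↦ t⁻¹) (k₁ + k₂ + 1 : ℕ) :=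
        (fwdDiff_iter_eq_sum_shift _ _ _ _).symm
    _ = _ := by
      simp only [fwdDiff_iter_inv _ _ _ hne, mul_neg_one, ← sub_eq_add_neg,
        ← descPochhammer_eval_eq_prod_range, descPochhammer_eval_eq_descFactorial,
        descFactorial_eq_factorial_mul_choose, neg_neg, one_pow, factorial_succ]
      push_cast
      field_simp
end

section
/- For every natural number μ ≥ 1, the following identity of integers holds: (2μ − 1) · ( 12·C(2μ, μ) + ∑_{1 ≤ ν ≤ μ, ν odd} (ν³ − ν)·C(2μ, μ−ν) + ∑_{1 ≤ ν ≤ μ, ν even} (ν³ + 8ν)·C(2μ, μ−ν) ) = 2·C(2μ − 1, μ)·(μ³ + 3μ² + 20μ − 12). -/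
/-- Telescoping auxiliary function. -/
def Gf (μ ν : ℕ) : ℤ :=
  if ν ≤ μ then
    ((4 * (μ : ℤ) - 2) * (ν : ℤ) ^ 3 + (4 * (μ : ℤ) ^ 2 - 6 * (μ : ℤ) + 2) * (ν : ℤ) ^ 2
        + (14 * (μ : ℤ) - 7) * (ν : ℤ) + (4 * (μ : ℤ) ^ 3 + 12 * (μ : ℤ) ^ 2 - 7 * (μ : ℤ))
      + (-1) ^ ν * (18 * (ν : ℤ) ^ 2 + (18 * (μ : ℤ) - 9) * (ν : ℤ) - 9 * (μ : ℤ)))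
      * (Nat.choose (2 * μ) (μ - ν) : ℤ)
  else 0

lemma gf_key (μ ν : ℕ) (hν1 : 1 ≤ ν) (hνμ : ν ≤ μ) :
    4 * (2 * (μ : ℤ) - 1) * (if Odd ν then (ν : ℤ) ^ 3 - (ν : ℤ) else (ν : ℤ) ^ 3 + 8 * (ν : ℤ))
        * (Nat.choose (2 * μ) (μ - ν) : ℤ)
      = Gf μ ν - Gf μ (ν + 1) := by
  rcases eq_or_lt_of_le hνμ with rfl | hlt
  · have h1 : Gf ν (ν + 1) = 0 := by
      simp [Gf]
    rw [h1, sub_zero, Gf, if_pos le_rfl]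
    rcases Nat.even_or_odd ν with he | ho
    · rw [if_neg (by simpa using he), he.neg_one_pow]
      ring
    · rw [if_pos ho, ho.neg_one_pow]
      ring
  · have hν1μ : ν + 1 ≤ μ := hlt
    rw [Gf, Gf, if_pos hνμ, if_pos hν1μ]
    -- binomial recurrence
    have hnat : Nat.choose (2 * μ) (μ - ν) * (μ - ν) = Nat.choose (2 * μ) (μ - ν - 1) * (μ + ν + 1) := by
      have e1 : μ - ν - 1 + 1 = μ - ν := by omega
      have e2 : 2 * μ - (μ - ν - 1) = μ + ν + 1 := by omega
      have := Nat.choose_succ_right_eq (2 * μ) (μ - ν - 1)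
      rw [e1, e2] at this
      exact this
    have hxy : (Nat.choose (2 * μ) (μ - ν) : ℤ) * ((μ : ℤ) - ν)
        = (Nat.choose (2 * μ) (μ - (ν + 1)) : ℤ) * ((μ : ℤ) + ν + 1) := by
      have e3 : μ - (ν + 1) = μ - ν - 1 := by omega
      rw [e3]
      have := congrArg (fun n : ℕ => (n : ℤ)) hnat
      push_cast [Nat.cast_sub hνμ] at this
      convert this using 1 <;> ring
    have hne : ((μ : ℤ) + ν + 1) ≠ 0 := by positivity
    apply mul_left_cancel₀ hne
    have hp : ((-1 : ℤ)) ^ (ν + 1) = -(-1 : ℤ) ^ ν := by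
      rw [pow_succ]; ring
    rw [hp]
    rcases Nat.even_or_odd ν with he | ho
    · rw [if_neg (by simpa using he), he.neg_one_pow]
      push_cast
      linear_combination (-((4 * (μ : ℤ) - 2) * ((ν : ℤ) + 1) ^ 3
          + (4 * (μ : ℤ) ^ 2 - 6 * (μ : ℤ) + 2) * ((ν : ℤ) + 1) ^ 2
          + (14 * (μ : ℤ) - 7) * ((ν : ℤ) + 1)
          + (4 * (μ : ℤ) ^ 3 + 12 * (μ : ℤ) ^ 2 - 7 * (μ : ℤ))
          - (18 * ((ν : ℤ) + 1) ^ 2 + (18 * (μ : ℤ) - 9) * ((ν : ℤ) + 1) - 9 * (μ : ℤ)))) * hxy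
    · rw [if_pos ho, ho.neg_one_pow]
      push_cast
      linear_combination (-((4 * (μ : ℤ) - 2) * ((ν : ℤ) + 1) ^ 3
          + (4 * (μ : ℤ) ^ 2 - 6 * (μ : ℤ) + 2) * ((ν : ℤ) + 1) ^ 2
          + (14 * (μ : ℤ) - 7) * ((ν : ℤ) + 1)
          + (4 * (μ : ℤ) ^ 3 + 12 * (μ : ℤ) ^ 2 - 7 * (μ : ℤ))
          + (18 * ((ν : ℤ) + 1) ^ 2 + (18 * (μ : ℤ) - 9) * ((ν : ℤ) + 1) - 9 * (μ : ℤ)))) * hxy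

lemma gf_tel (μ : ℕ) :
    ∑ ν ∈ Finset.Icc 1 μ, (Gf μ ν - Gf μ (ν + 1)) = Gf μ 1 - Gf μ (μ + 1) := by
  rw [← Finset.Ico_add_one_right_eq_Icc, Finset.sum_Ico_eq_sum_range]
  simp_rw [show ∀ i : ℕ, 1 + i = i + 1 from fun i => Nat.add_comm 1 i]
  simpa using Finset.sum_range_sub' (fun i => Gf μ (i + 1)) μ

/-- For every natural number `μ ≥ 1`, the identity of integers
`(2μ − 1) · (12·C(2μ, μ) + ∑_{1 ≤ ν ≤ μ, ν odd} (ν³ − ν)·C(2μ, μ−ν)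
    + ∑_{1 ≤ ν ≤ μ, ν even} (ν³ + 8ν)·C(2μ, μ−ν))
  = 2·C(2μ − 1, μ)·(μ³ + 3μ² + 20μ − 12)` holds. -/
theorem stmt_18 (μ : ℕ) (hμ : 1 ≤ μ) :
    (2 * (μ : ℤ) - 1) *
        (12 * (Nat.choose (2 * μ) μ : ℤ)
          + (∑ ν ∈ (Finset.Icc 1 μ).filter (fun ν => Odd ν),
              ((ν : ℤ) ^ 3 - (ν : ℤ)) * (Nat.choose (2 * μ) (μ - ν) : ℤ))
          + (∑ ν ∈ (Finset.Icc 1 μ).filter (fun ν => Even ν),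
              ((ν : ℤ) ^ 3 + 8 * (ν : ℤ)) * (Nat.choose (2 * μ) (μ - ν) : ℤ)))
      = 2 * (Nat.choose (2 * μ - 1) μ : ℤ) *
          ((μ : ℤ) ^ 3 + 3 * (μ : ℤ) ^ 2 + 20 * (μ : ℤ) - 12) := by
  obtain ⟨m, rfl⟩ : ∃ m, μ = m + 1 := ⟨μ - 1, by omega⟩
  -- the merged weighted sum
  have hmerge :
      (∑ ν ∈ (Finset.Icc 1 (m + 1)).filter (fun ν => Odd ν),
          ((ν : ℤ) ^ 3 - (ν : ℤ)) * (Nat.choose (2 * (m + 1)) (m + 1 - ν) : ℤ))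
        + (∑ ν ∈ (Finset.Icc 1 (m + 1)).filter (fun ν => Even ν),
          ((ν : ℤ) ^ 3 + 8 * (ν : ℤ)) * (Nat.choose (2 * (m + 1)) (m + 1 - ν) : ℤ))
      = ∑ ν ∈ Finset.Icc 1 (m + 1),
          (if Odd ν then (ν : ℤ) ^ 3 - (ν : ℤ) else (ν : ℤ) ^ 3 + 8 * (ν : ℤ))
            * (Nat.choose (2 * (m + 1)) (m + 1 - ν) : ℤ) := by
    rw [← Finset.sum_filter_add_sum_filter_not (Finset.Icc 1 (m + 1)) (fun ν => Odd ν)]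
    congr 1
    · exact Finset.sum_congr rfl fun ν hν => by
        rw [Finset.mem_filter] at hν
        rw [if_pos hν.2]
    · rw [show ((Finset.Icc 1 (m + 1)).filter (fun ν => Even ν))
          = ((Finset.Icc 1 (m + 1)).filter (fun ν => ¬ Odd ν)) by
        apply Finset.filter_congr; intro x _; exact Iff.symm Nat.not_odd_iff_even]
      exact Finset.sum_congr rfl fun ν hν => by
        rw [Finset.mem_filter] at hν
        rw [if_neg hν.2]
  -- telescoping evaluation of the merged sum
  have hsum :
      4 * (2 * ((m : ℤ) + 1) - 1) *
        (∑ ν ∈ Finset.Icc 1 (m + 1),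
          (if Odd ν then (ν : ℤ) ^ 3 - (ν : ℤ) else (ν : ℤ) ^ 3 + 8 * (ν : ℤ))
            * (Nat.choose (2 * (m + 1)) (m + 1 - ν) : ℤ))
      = Gf (m + 1) 1 - Gf (m + 1) (m + 2) := by
    rw [Finset.mul_sum, ← gf_tel (m + 1)]
    apply Finset.sum_congr rfl
    intro ν hν
    rw [Finset.mem_Icc] at hν
    have := gf_key (m + 1) ν hν.1 hν.2
    push_cast at this ⊢
    linear_combination this
  have hGtop : Gf (m + 1) (m + 2) = 0 := by
    rw [Gf, if_neg (by omega)]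
  have hG1 : Gf (m + 1) 1
      = (4 * (m : ℤ) ^ 3 + 28 * (m : ℤ) ^ 2 + 40 * (m : ℤ))
          * (Nat.choose (2 * (m + 1)) m : ℤ) := by
    rw [Gf, if_pos (by omega)]
    have : m + 1 - 1 = m := by omega
    rw [this]
    push_cast
    ring
  -- binomial relations
  have h1 : ((m : ℤ) + 2) * (Nat.choose (2 * (m + 1)) m : ℤ)
      = ((m : ℤ) + 1) * (Nat.choose (2 * (m + 1)) (m + 1) : ℤ) := by
    have := Nat.choose_succ_right_eq (2 * (m + 1)) m
    have e : 2 * (m + 1) - m = m + 2 := by omega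
    rw [e] at this
    have := congrArg (fun n : ℕ => (n : ℤ)) this
    push_cast at this
    linarith
  have h2 : (Nat.choose (2 * (m + 1)) (m + 1) : ℤ)
      = 2 * (Nat.choose (2 * (m + 1) - 1) (m + 1) : ℤ) := by
    have e : 2 * (m + 1) - 1 = 2 * m + 1 := by omega
    rw [e]
    have hp : Nat.choose (2 * m + 2) (m + 1) = Nat.choose (2 * m + 1) m + Nat.choose (2 * m + 1) (m + 1) :=
      Nat.choose_succ_succ (2 * m + 1) m
    have hs : Nat.choose (2 * m + 1) m = Nat.choose (2 * m + 1) (m + 1) := by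
      have := Nat.choose_symm (n := 2 * m + 1) (k := m + 1) (by omega)
      rw [show 2 * m + 1 - (m + 1) = m by omega] at this
      exact this
    have e2 : 2 * (m + 1) = 2 * m + 2 := by omega
    rw [e2, hp, hs]
    push_cast
    ring
  -- finish
  apply mul_left_cancel₀ (show (4 : ℤ) ≠ 0 by norm_num)
  rw [hGtop, sub_zero, hG1] at hsum
  push_cast at hsum ⊢
  linear_combination hsum + hmerge * (4 * (2 * ((m : ℤ) + 1) - 1))
    + (4 * (m : ℤ) * ((m : ℤ) + 5)) * h1
    + (4 * ((m : ℤ) ^ 3 + 6 * (m : ℤ) ^ 2 + 29 * (m : ℤ) + 12)) * h2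
end
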